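/- arXiv:1812.09970 — 5 statements merged into one kernel-verified Lean document; each statement's English description precedes it below -/
import Mathlib

section
/- In the condensed panel setting with Gaussian errors, if deterministic weights ω̃ ∈ Ω and λ̃ ∈ Λ (the unit simplices) satisfy ‖ω̃‖ = o(N₁^{−1/2}) and ‖λ̃ − ψ‖ = o(T₁^{−1/2}), and the oracle bias condition L_{NT} − ω̃'L_{:T} − L_{N:}λ̃ + ω̃'L_{::}λ̃ = o((N₁T₁)^{−1/2}) holds along the sequence of problems, then τ̂(λ̃,ω̃) − τ = ε_{NT} − ε_{N:}ψ + o_p((N₁T₁)^{−1/2}). -/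
open Filter MeasureTheory ProbabilityTheory Matrix Real Asymptotics

noncomputable section

namespace SDIDCond

/-- the unit simplex in `ℝ^d`. -/
def simplex (d : ℕ) : Set (Fin d → ℝ) := {v | (∀ i, 0 ≤ v i) ∧ ∑ i, v i = 1}

/-- condensed outcome `Y = L + 1{i = N, t = T}·τ + ε`. -/
def Ycond {N0 T0 : ℕ} (L : Matrix (Fin (N0 + 1)) (Fin (T0 + 1)) ℝ) (τ : ℝ)
    (Em : Matrix (Fin (N0 + 1)) (Fin (T0 + 1)) ℝ) : Matrix (Fin (N0 + 1)) (Fin (T0 + 1)) ℝ :=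
  fun i t => L i t + (if i = Fin.last N0 ∧ t = Fin.last T0 then τ else 0) + Em i t

/-- the condensed weighted difference-in-differences estimator
`τ̂(λ,ω) = Y_{NT} − (Y_{N:}λ + ω'Y_{:T} − ω'Y_{::}λ)`. -/
def tauCond {N0 T0 : ℕ} (lam : Fin T0 → ℝ) (w : Fin N0 → ℝ)
    (Y : Matrix (Fin (N0 + 1)) (Fin (T0 + 1)) ℝ) : ℝ :=
  Y (Fin.last N0) (Fin.last T0)
    - ((∑ t : Fin T0, Y (Fin.last N0) t.castSucc * lam t)
       + (∑ i : Fin N0, w i * Y i.castSucc (Fin.last T0))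
       - ∑ i : Fin N0, ∑ t : Fin T0, w i * Y i.castSucc t.castSucc * lam t)

/-- the `T₀ × T₀` block `Σ_{::}`. -/
def Scc {T0 : ℕ} (S : Matrix (Fin (T0 + 1)) (Fin (T0 + 1)) ℝ) : Matrix (Fin T0) (Fin T0) ℝ :=
  S.submatrix Fin.castSucc Fin.castSucc

/-- the autoregression vector `ψ = Σ_{::}⁻¹ Σ_{:,T}`, i.e. the (unique) minimizer of
`v ↦ E(ε_{1:}v − ε_{1T})²` for a row with covariance `Σ`. -/
def psiC {T0 : ℕ} (S : Matrix (Fin (T0 + 1)) (Fin (T0 + 1)) ℝ) : Fin T0 → ℝ :=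
  (Scc S)⁻¹ *ᵥ fun s : Fin T0 => S s.castSucc (Fin.last T0)

/-- `Var(ε_{1:}ψ − ε_{1T}) = [ψ; −1]'·Σ·[ψ; −1]` for a row with covariance `Σ`. -/
def varAR {T0 : ℕ} (S : Matrix (Fin (T0 + 1)) (Fin (T0 + 1)) ℝ) : ℝ :=
  (Fin.snoc (psiC S) (-1) : Fin (T0 + 1) → ℝ) ⬝ᵥ
    (S *ᵥ (Fin.snoc (psiC S) (-1) : Fin (T0 + 1) → ℝ))

/-- `T₁ = 1/Var(ε_{1:}ψ − ε_{1T})`. -/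
def T1 {T0 : ℕ} (S : Matrix (Fin (T0 + 1)) (Fin (T0 + 1)) ℝ) : ℝ := (varAR S)⁻¹

/-- Euclidean norm of a finite vector. -/
def norm2 {k : ℕ} (v : Fin k → ℝ) : ℝ := Real.sqrt (∑ i, v i ^ 2)

/-- `svalSucc A k` is the `(k+1)`-st largest singular value of `A`, via the
Eckart–Young characterization. -/
def svalSucc {p q : ℕ} (A : Matrix (Fin p) (Fin q) ℝ) (k : ℕ) : ℝ :=
  sInf {c : ℝ | 0 ≤ c ∧ ∃ B : Matrix (Fin p) (Fin q) ℝ, B.rank ≤ k ∧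
    ∀ x : Fin q → ℝ, norm2 (A *ᵥ x - B *ᵥ x) ≤ c * norm2 x}

/-- the realized penalized objective defining `(ω̂₀, ω̂)`. -/
def objW {N0 T0 : ℕ} (ζ : ℝ) (Y : Matrix (Fin (N0 + 1)) (Fin (T0 + 1)) ℝ)
    (w0 : ℝ) (w : Fin N0 → ℝ) : ℝ :=
  (∑ t : Fin T0,
    (w0 + (∑ i : Fin N0, w i * Y i.castSucc t.castSucc) - Y (Fin.last N0) t.castSucc) ^ 2)
  + ζ ^ 2 * T0 * ∑ i, w i ^ 2

/-- the realized objective defining `(λ̂₀, λ̂)`. -/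
def objL {N0 T0 : ℕ} (Y : Matrix (Fin (N0 + 1)) (Fin (T0 + 1)) ℝ)
    (l0 : ℝ) (l : Fin T0 → ℝ) : ℝ :=
  ∑ i : Fin N0,
    (l0 + (∑ t : Fin T0, Y i.castSucc t.castSucc * l t) - Y i.castSucc (Fin.last T0)) ^ 2

/-- the oracle objective defining `(ω̃₀, ω̃)`, with `σ² = trace(Σ_{::})/T₀`. -/
def objWOracle {N0 T0 : ℕ} (ζ : ℝ) (S : Matrix (Fin (T0 + 1)) (Fin (T0 + 1)) ℝ)
    (L : Matrix (Fin (N0 + 1)) (Fin (T0 + 1)) ℝ) (w0 : ℝ) (w : Fin N0 → ℝ) : ℝ :=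
  (∑ t : Fin T0,
    (w0 + (∑ i : Fin N0, w i * L i.castSucc t.castSucc) - L (Fin.last N0) t.castSucc) ^ 2)
  + (ζ ^ 2 + Matrix.trace (Scc S) / T0) * T0 * ∑ i, w i ^ 2

/-- the oracle objective defining `(λ̃₀, λ̃)`; note
`‖Σ_{::}^{1/2}(λ − ψ)‖² = (λ − ψ)'Σ_{::}(λ − ψ)`. -/
def objLOracle {N0 T0 : ℕ} (S : Matrix (Fin (T0 + 1)) (Fin (T0 + 1)) ℝ)
    (L : Matrix (Fin (N0 + 1)) (Fin (T0 + 1)) ℝ) (l0 : ℝ) (l : Fin T0 → ℝ) : ℝ :=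
  (∑ i : Fin N0,
    (l0 + (∑ t : Fin T0, L i.castSucc t.castSucc * l t) - L i.castSucc (Fin.last T0)) ^ 2)
  + (N0 : ℝ) * ((l - psiC S) ⬝ᵥ (Scc S *ᵥ (l - psiC S)))

/-!
The estimation error is linear in the noise: `τ̂(λ̃,ω̃) − τ − (ε_{NT} − ε_{N:}ψ)` is the oracle
bias plus `ε_{N:}(ψ − λ̃) + Σᵢ ω̃ᵢ (ε_{i:}λ̃ − ε_{iT})`, a sum of independent centred Gaussians,
one per row. If `c` bounds the eigenvalues of `Σ_{::}`, its variance is at most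
`N₁⁻¹ c ‖λ̃ − ψ‖² + ‖ω̃‖² (2c ‖λ̃ − ψ‖² + 2/T₁)`; after scaling by `N₁T₁` this is `o(1)` by the
rate assumptions, so Chebyshev's inequality gives the claim.
-/

end SDIDCond

namespace ProbabilityTheory

variable {Ω : Type*} [MeasurableSpace Ω] {μ : Measure Ω}

lemma hasLaw_of_map_eq {𝓧 : Type*} [MeasurableSpace 𝓧] {f : Ω → 𝓧} {ν : Measure 𝓧} [NeZero ν]
    (h : μ.map f = ν) : HasLaw f ν μ :=
  ⟨.of_map_ne_zero (h ▸ NeZero.ne ν), h⟩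

variable {f : Ω → ℝ} {v : NNReal}

lemma HasLaw.memLp_two_of_gaussianReal (h : HasLaw f (gaussianReal 0 v) μ) : MemLp f 2 μ :=
  (memLp_map_measure_iff aestronglyMeasurable_id h.aemeasurable).1
    (h.map_eq ▸ memLp_id_gaussianReal 2)

lemma HasLaw.integral_eq_zero_of_gaussianReal (h : HasLaw f (gaussianReal 0 v) μ) :
    μ[f] = 0 := by
  rw [h.integral_eq, integral_id_gaussianReal]

lemma HasLaw.variance_eq_of_gaussianReal (h : HasLaw f (gaussianReal 0 v) μ) :
    Var[f; μ] = v := by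
  rw [h.variance_eq, variance_id_gaussianReal]

lemma variance_add_le_two_mul [IsFiniteMeasure μ] {X Y : Ω → ℝ} (hX : MemLp X 2 μ)
    (hY : MemLp Y 2 μ) :
    Var[X + Y; μ] ≤ 2 * Var[X; μ] + 2 * Var[Y; μ] := by
  have h := variance_nonneg (X - Y) μ
  rw [variance_sub hX hY] at h
  rw [variance_add hX hY]
  linarith

lemma tendsto_measure_le_abs_add {ι : Type*} {l : Filter ι} {Ω : ι → Type*}
    [∀ n, MeasurableSpace (Ω n)] {μ : ∀ n, Measure (Ω n)} [∀ n, IsProbabilityMeasure (μ n)]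
    {b : ι → ℝ} {X : ∀ n, Ω n → ℝ} (hb : Tendsto b l (nhds 0))
    (hX : ∀ n, MemLp (X n) 2 (μ n)) (hmean : ∀ n, (μ n)[X n] = 0)
    (hvar : Tendsto (fun n => Var[X n; μ n]) l (nhds 0)) {ε : ℝ} (hε : 0 < ε) :
    Tendsto (fun n => μ n {ω | ε ≤ |b n + X n ω|}) l (nhds 0) := by
  have hε2 : 0 < ε / 2 := half_pos hε
  have hbound : Tendsto (fun n => ENNReal.ofReal (Var[X n; μ n] / (ε / 2) ^ 2)) l (nhds 0) := by
    simpa using ENNReal.tendsto_ofReal (hvar.div_const ((ε / 2) ^ 2))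
  refine tendsto_of_tendsto_of_tendsto_of_le_of_le' tendsto_const_nhds hbound
    (Eventually.of_forall fun _ => zero_le) ?_
  have hb' : Tendsto (fun n => |b n|) l (nhds 0) := by simpa using hb.abs
  filter_upwards [hb'.eventually_lt_const hε2] with n hn
  calc μ n {ω | ε ≤ |b n + X n ω|}
      ≤ μ n {ω | ε / 2 ≤ |X n ω - (μ n)[X n]|} := by
        refine measure_mono fun ω hω => ?_
        simp only [Set.mem_ofPred_eq, hmean, sub_zero] at hω ⊢
        linarith [abs_add_le (b n) (X n ω), hn.le]
    _ ≤ ENNReal.ofReal (Var[X n; μ n] / (ε / 2) ^ 2) := meas_ge_le_variance_div_sq (hX n) hε2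

end ProbabilityTheory

lemma tendsto_sqrt_mul_of_isLittleO_inv_sqrt {ι : Type*} {l : Filter ι} {a f : ι → ℝ}
    (hf : f =o[l] fun n => (√(a n))⁻¹) : Tendsto (fun n => √(a n) * f n) l (nhds 0) := by
  have hbdd : (fun n => √(a n) * (√(a n))⁻¹) =O[l] fun _ => (1 : ℝ) :=
    IsBigO.of_bound 1 (Eventually.of_forall fun n => by
      rw [norm_one, mul_one, norm_mul, norm_inv]
      rcases eq_or_ne ‖√(a n)‖ 0 with h | h
      · simp [h]
      · rw [mul_inv_cancel₀ h])
  exact isLittleO_one_iff ℝ |>.1 (((isBigO_refl _ l).mul_isLittleO hf).trans_isBigO hbdd)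

lemma tendsto_max_mul_sq_of_isLittleO_inv_sqrt {ι : Type*} {l : Filter ι} {a f : ι → ℝ}
    (hf : f =o[l] fun n => (√(a n))⁻¹) :
    Tendsto (fun n => max (a n) 0 * f n ^ 2) l (nhds 0) := by
  simpa [mul_pow, Real.sq_sqrt'] using (tendsto_sqrt_mul_of_isLittleO_inv_sqrt hf).pow 2

namespace SDIDCond

def errorCoeff {N0 T0 : ℕ} (w : Fin N0 → ℝ) (lam ψ : Fin T0 → ℝ) :
    Fin (N0 + 1) → Fin (T0 + 1) → ℝ :=
  Fin.snoc (fun i => w i • Fin.snoc lam (-1)) (Fin.snoc (ψ - lam) 0)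

lemma tauCond_Ycond_sub_eq {N0 T0 : ℕ} (lam : Fin T0 → ℝ) (w : Fin N0 → ℝ)
    (L : Matrix (Fin (N0 + 1)) (Fin (T0 + 1)) ℝ) (τ : ℝ)
    (Em : Matrix (Fin (N0 + 1)) (Fin (T0 + 1)) ℝ) (ψ : Fin T0 → ℝ) :
    tauCond lam w (Ycond L τ Em) - τ
      - (Em (Fin.last N0) (Fin.last T0) - ∑ s : Fin T0, Em (Fin.last N0) s.castSucc * ψ s)
    = tauCond lam w L + ∑ i, ∑ t, errorCoeff w lam ψ i t * Em i t := by
  simp only [tauCond, Ycond, errorCoeff, Fin.sum_univ_castSucc, Fin.snoc_last, Fin.snoc_castSucc,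
    (Fin.castSucc_lt_last _).ne, false_and, and_false, if_false, and_self, if_true,
    Pi.smul_apply, Pi.sub_apply, smul_eq_mul, add_zero, zero_mul, add_mul, mul_add,
    Finset.sum_add_distrib, sub_mul, Finset.sum_sub_distrib, neg_mul, mul_neg,
    Finset.sum_neg_distrib, mul_one, mul_comm (ψ _), mul_comm (lam _), mul_right_comm (w _) (lam _)]
  ring

structure IsGaussianPanelNoise {N0 T0 : ℕ} {Ω : Type*} [MeasurableSpace Ω] (μ : Measure Ω)
    (E : Ω → Matrix (Fin (N0 + 1)) (Fin (T0 + 1)) ℝ) (S : Matrix (Fin (T0 + 1)) (Fin (T0 + 1)) ℝ)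
    (N1 : ℝ) : Prop where
  ctrl : ∀ (i : Fin N0) (a : Fin (T0 + 1) → ℝ),
    μ.map (fun ω => ∑ t, a t * E ω i.castSucc t) = gaussianReal 0 (a ⬝ᵥ (S *ᵥ a)).toNNReal
  last : ∀ a : Fin (T0 + 1) → ℝ,
    μ.map (fun ω => ∑ t, a t * E ω (Fin.last N0) t)
      = gaussianReal 0 (N1⁻¹ * (a ⬝ᵥ (S *ᵥ a))).toNNReal

lemma dotProduct_self_eq_norm2_sq {k : ℕ} (v : Fin k → ℝ) : v ⬝ᵥ v = norm2 v ^ 2 := by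
  rw [norm2, Real.sq_sqrt (Finset.sum_nonneg fun i _ => sq_nonneg (v i))]
  simp only [dotProduct, sq]

lemma norm2_sub_comm {k : ℕ} (u v : Fin k → ℝ) : norm2 (u - v) = norm2 (v - u) := by
  simp only [norm2, Pi.sub_apply, sq, ← neg_sub (u _), neg_mul_neg]

lemma dotProduct_mulVec_snoc_zero {T0 : ℕ} (S : Matrix (Fin (T0 + 1)) (Fin (T0 + 1)) ℝ)
    (a : Fin T0 → ℝ) :
    (Fin.snoc a 0 : Fin (T0 + 1) → ℝ) ⬝ᵥ (S *ᵥ Fin.snoc a 0) = a ⬝ᵥ (Scc S *ᵥ a) := by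
  simp [dotProduct, mulVec, Scc, Fin.sum_univ_castSucc]

lemma snoc_eq_snoc_sub_add_snoc {T0 : ℕ} (lam ψ : Fin T0 → ℝ) (x : ℝ) :
    (Fin.snoc lam x : Fin (T0 + 1) → ℝ) = Fin.snoc (lam - ψ) 0 + Fin.snoc ψ x := by
  ext t
  induction t using Fin.lastCases <;> simp

section GaussianRows

variable {N0 T0 : ℕ} {Ω : Type*} [MeasurableSpace Ω] {μ : Measure Ω}
  {E : Ω → Matrix (Fin (N0 + 1)) (Fin (T0 + 1)) ℝ} {S : Matrix (Fin (T0 + 1)) (Fin (T0 + 1)) ℝ}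
  {N1 c : ℝ}

lemma IsGaussianPanelNoise.exists_hasLaw_rowSum (hE : IsGaussianPanelNoise μ E S N1)
    (i : Fin (N0 + 1)) (a : Fin (T0 + 1) → ℝ) :
    ∃ v, HasLaw (fun ω => ∑ t, a t * E ω i t) (gaussianReal 0 v) μ := by
  induction i using Fin.lastCases with
  | last => exact ⟨_, hasLaw_of_map_eq (hE.last a)⟩
  | cast i => exact ⟨_, hasLaw_of_map_eq (hE.ctrl i a)⟩

lemma variance_lastRow_le
    (hlast : ∀ a : Fin (T0 + 1) → ℝ,
      μ.map (fun ω => ∑ t, a t * E ω (Fin.last N0) t)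
        = gaussianReal 0 (N1⁻¹ * (a ⬝ᵥ (S *ᵥ a))).toNNReal)
    (hN1 : 0 ≤ N1) (hc : 0 ≤ c) (hq : ∀ a, a ⬝ᵥ (Scc S *ᵥ a) ≤ c * (a ⬝ᵥ a)) (b : Fin T0 → ℝ) :
    Var[fun ω => ∑ t, (Fin.snoc b 0 : Fin (T0 + 1) → ℝ) t * E ω (Fin.last N0) t; μ]
      ≤ N1⁻¹ * (c * norm2 b ^ 2) := by
  rw [(hasLaw_of_map_eq (hlast _)).variance_eq_of_gaussianReal, Real.coe_toNNReal',
    dotProduct_mulVec_snoc_zero, ← dotProduct_self_eq_norm2_sq]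
  exact max_le (mul_le_mul_of_nonneg_left (hq b) (inv_nonneg.2 hN1))
    (by rw [dotProduct_self_eq_norm2_sq]; positivity)

/-- Splitting `[λ; −1] = [λ − ψ; 0] + [ψ; −1]` separates the weight error from the
autoregression residual, whose variance is `varAR S`. -/
lemma variance_ctrlRow_le [IsFiniteMeasure μ]
    (hctrl : ∀ (i : Fin N0) (a : Fin (T0 + 1) → ℝ),
      μ.map (fun ω => ∑ t, a t * E ω i.castSucc t) = gaussianReal 0 (a ⬝ᵥ (S *ᵥ a)).toNNReal)
    (hc : 0 ≤ c) (hq : ∀ a, a ⬝ᵥ (Scc S *ᵥ a) ≤ c * (a ⬝ᵥ a))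
    (i : Fin N0) (x : ℝ) (lam : Fin T0 → ℝ) :
    Var[fun ω => ∑ t, (x • Fin.snoc lam (-1) : Fin (T0 + 1) → ℝ) t * E ω i.castSucc t; μ]
      ≤ x ^ 2 * (2 * (c * norm2 (lam - psiC S) ^ 2) + 2 * max (varAR S) 0) := by
  set U := fun ω => ∑ t, (Fin.snoc (lam - psiC S) 0 : Fin (T0 + 1) → ℝ) t * E ω i.castSucc t
  set D := fun ω => ∑ t, (Fin.snoc (psiC S) (-1) : Fin (T0 + 1) → ℝ) t * E ω i.castSucc t
  have hU := hasLaw_of_map_eq (hctrl i (Fin.snoc (lam - psiC S) 0))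
  have hD := hasLaw_of_map_eq (hctrl i (Fin.snoc (psiC S) (-1)))
  have hsplit : (fun ω => ∑ t, (x • Fin.snoc lam (-1) : Fin (T0 + 1) → ℝ) t * E ω i.castSucc t)
      = fun ω => x * (U + D) ω := by
    ext ω
    simp only [snoc_eq_snoc_sub_add_snoc lam (psiC S), U, D, Pi.add_apply, Pi.smul_apply,
      smul_eq_mul, ← Finset.sum_add_distrib, Finset.mul_sum]
    exact Finset.sum_congr rfl fun t _ => by ring
  have hVarU : Var[U; μ] ≤ c * norm2 (lam - psiC S) ^ 2 := by
    rw [hU.variance_eq_of_gaussianReal, Real.coe_toNNReal', dotProduct_mulVec_snoc_zero,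
      ← dotProduct_self_eq_norm2_sq]
    exact max_le (hq _) (by rw [dotProduct_self_eq_norm2_sq]; positivity)
  have hVarD : Var[D; μ] = max (varAR S) 0 := by
    rw [hD.variance_eq_of_gaussianReal, Real.coe_toNNReal', varAR]
  rw [hsplit, variance_const_mul]
  gcongr
  calc Var[U + D; μ] ≤ 2 * Var[U; μ] + 2 * Var[D; μ] :=
        variance_add_le_two_mul hU.memLp_two_of_gaussianReal hD.memLp_two_of_gaussianReal
    _ ≤ _ := by rw [hVarD]; gcongr

lemma IsGaussianPanelNoise.memLp_errorSum (hE : IsGaussianPanelNoise μ E S N1)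
    (a : Fin (N0 + 1) → Fin (T0 + 1) → ℝ) :
    MemLp (fun ω => ∑ i, ∑ t, a i t * E ω i t) 2 μ :=
  memLp_finsetSum _ fun i _ =>
    (hE.exists_hasLaw_rowSum i (a i)).choose_spec.memLp_two_of_gaussianReal

lemma IsGaussianPanelNoise.integral_errorSum [IsFiniteMeasure μ]
    (hE : IsGaussianPanelNoise μ E S N1)
    (a : Fin (N0 + 1) → Fin (T0 + 1) → ℝ) :
    μ[fun ω => ∑ i, ∑ t, a i t * E ω i t] = 0 := by
  have hrow := fun i => (hE.exists_hasLaw_rowSum i (a i)).choose_spec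
  rw [integral_finsetSum _ fun i _ => (hrow i).memLp_two_of_gaussianReal.integrable one_le_two]
  exact Finset.sum_eq_zero fun i _ => (hrow i).integral_eq_zero_of_gaussianReal

lemma variance_errorSum_le [IsProbabilityMeasure μ]
    (hindep : iIndepFun (m := fun _ => inferInstance)
      (fun (i : Fin (N0 + 1)) (ω : Ω) => fun t => E ω i t) μ)
    (hE : IsGaussianPanelNoise μ E S N1)
    (hN1 : 0 ≤ N1) (hc : 0 ≤ c) (hq : ∀ a, a ⬝ᵥ (Scc S *ᵥ a) ≤ c * (a ⬝ᵥ a))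
    (w : Fin N0 → ℝ) (lam : Fin T0 → ℝ) :
    Var[fun ω => ∑ i, ∑ t, errorCoeff w lam (psiC S) i t * E ω i t; μ]
      ≤ N1⁻¹ * (c * norm2 (lam - psiC S) ^ 2)
        + norm2 w ^ 2 * (2 * (c * norm2 (lam - psiC S) ^ 2) + 2 * max (varAR S) 0) := by
  set F : Fin (N0 + 1) → Ω → ℝ := fun i ω => ∑ t, errorCoeff w lam (psiC S) i t * E ω i t
  have hF : ∀ i, MemLp (F i) 2 μ := fun i =>
    (hE.exists_hasLaw_rowSum i _).choose_spec.memLp_two_of_gaussianReal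
  have hindepF : iIndepFun F μ :=
    hindep.comp _ fun i => Finset.measurable_sum _ fun t _ => (measurable_pi_apply t).const_mul _
  have hsum : (fun ω => ∑ i, F i ω) = ∑ i, F i := by ext ω; simp
  have hw : norm2 w ^ 2 = ∑ i, w i ^ 2 :=
    Real.sq_sqrt (Finset.sum_nonneg fun i _ => sq_nonneg _)
  have hlastRow := variance_lastRow_le hE.last hN1 hc hq (psiC S - lam)
  rw [norm2_sub_comm] at hlastRow
  rw [hsum, IndepFun.variance_sum (fun i _ => hF i) fun i _ j _ hij => hindepF.indepFun hij,
    Fin.sum_univ_castSucc, add_comm, hw, Finset.sum_mul]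
  gcongr with i
  · simpa [F, errorCoeff] using hlastRow
  · simpa [F, errorCoeff] using variance_ctrlRow_le hE.ctrl hc hq i (w i) lam

lemma variance_sqrt_mul_errorSum_le [IsProbabilityMeasure μ]
    (hindep : iIndepFun (m := fun _ => inferInstance)
      (fun (i : Fin (N0 + 1)) (ω : Ω) => fun t => E ω i t) μ)
    (hE : IsGaussianPanelNoise μ E S N1)
    (hN1 : 0 < N1) (hc : 0 ≤ c) (hq : ∀ a, a ⬝ᵥ (Scc S *ᵥ a) ≤ c * (a ⬝ᵥ a))
    (w : Fin N0 → ℝ) (lam : Fin T0 → ℝ) :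
    Var[fun ω => √(N1 * T1 S) * ∑ i, ∑ t, errorCoeff w lam (psiC S) i t * E ω i t; μ]
      ≤ c * (max (T1 S) 0 * norm2 (lam - psiC S) ^ 2)
        + 2 * c * (N1 * norm2 w ^ 2 * (max (T1 S) 0 * norm2 (lam - psiC S) ^ 2))
        + 2 * (N1 * norm2 w ^ 2) := by
  have hT1varAR : max (T1 S) 0 * max (varAR S) 0 ≤ 1 := by
    rcases le_or_gt (varAR S) 0 with h | h
    · simp [max_eq_right h]
    · rw [T1, max_eq_left (inv_pos.2 h).le, max_eq_left h.le, inv_mul_cancel₀ h.ne']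
  have hk : √(N1 * T1 S) ^ 2 = N1 * max (T1 S) 0 := by
    rw [Real.sq_sqrt', mul_max_of_nonneg _ _ hN1.le, mul_zero]
  rw [variance_const_mul, hk]
  calc N1 * max (T1 S) 0 * Var[fun ω => ∑ i, ∑ t, errorCoeff w lam (psiC S) i t * E ω i t; μ]
      ≤ N1 * max (T1 S) 0 * (N1⁻¹ * (c * norm2 (lam - psiC S) ^ 2)
        + norm2 w ^ 2 * (2 * (c * norm2 (lam - psiC S) ^ 2) + 2 * max (varAR S) 0)) := by
        gcongr
        exact variance_errorSum_le hindep hE hN1.le hc hq w lam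
    _ = c * (max (T1 S) 0 * norm2 (lam - psiC S) ^ 2)
        + 2 * c * (N1 * norm2 w ^ 2 * (max (T1 S) 0 * norm2 (lam - psiC S) ^ 2))
        + 2 * (N1 * norm2 w ^ 2) * (max (T1 S) 0 * max (varAR S) 0) := by
        field_simp
        ring
    _ ≤ _ := by
        have := mul_le_of_le_one_right (by positivity : 0 ≤ 2 * (N1 * norm2 w ^ 2)) hT1varAR
        linarith

end GaussianRows

theorem oracle_asymptotic_linearity_general
    (N0 T0 : ℕ → ℕ) (N1 : ℕ → ℝ) (hN1 : ∀ n, 0 < N1 n)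
    (Ωt : ℕ → Type) [∀ n, MeasurableSpace (Ωt n)]
    (μ : ∀ n, Measure (Ωt n)) [∀ n, IsProbabilityMeasure (μ n)]
    (L : ∀ n, Matrix (Fin (N0 n + 1)) (Fin (T0 n + 1)) ℝ) (τ : ℕ → ℝ)
    (E : ∀ n, Ωt n → Matrix (Fin (N0 n + 1)) (Fin (T0 n + 1)) ℝ)
    (Sg : ∀ n, Matrix (Fin (T0 n + 1)) (Fin (T0 n + 1)) ℝ)
    -- rows are independent mean-zero Gaussian vectors, with covariance Σ for the
    -- first N₀ rows and N₁⁻¹Σ for the last row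
    (hrowindep : ∀ n, iIndepFun (m := fun _ => inferInstance)
      (fun (i : Fin (N0 n + 1)) (ω : Ωt n) => fun t => E n ω i t) (μ n))
    (hgaussCtrl : ∀ n (i : Fin (N0 n)) (a : Fin (T0 n + 1) → ℝ),
      Measure.map (fun ω => ∑ t, a t * E n ω i.castSucc t) (μ n)
        = gaussianReal 0 (Real.toNNReal (a ⬝ᵥ ((Sg n) *ᵥ a))))
    (hgaussLast : ∀ n (a : Fin (T0 n + 1) → ℝ),
      Measure.map (fun ω => ∑ t, a t * E n ω (Fin.last (N0 n)) t) (μ n)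
        = gaussianReal 0 (Real.toNNReal ((N1 n)⁻¹ * (a ⬝ᵥ ((Sg n) *ᵥ a)))))
    -- eigenvalues of Σ_{::} bounded and bounded away from zero
    (hEig : ∃ c₁ c₂ : ℝ, 0 < c₁ ∧ ∀ n (a : Fin (T0 n) → ℝ),
      c₁ * (a ⬝ᵥ a) ≤ a ⬝ᵥ (Scc (Sg n) *ᵥ a) ∧ a ⬝ᵥ (Scc (Sg n) *ᵥ a) ≤ c₂ * (a ⬝ᵥ a))
    -- deterministic simplex weights
    (tw : ∀ n, Fin (N0 n) → ℝ) (tl : ∀ n, Fin (T0 n) → ℝ)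
    (hwSmall : (fun n => norm2 (tw n)) =o[atTop] fun n => (Real.sqrt (N1 n))⁻¹)
    (hlSmall : (fun n => norm2 (tl n - psiC (Sg n)))
      =o[atTop] fun n => (Real.sqrt (T1 (Sg n)))⁻¹)
    -- oracle bias condition: L_{NT} − ω̃'L_{:T} − L_{N:}λ̃ + ω̃'L_{::}λ̃ = o((N₁T₁)^{−1/2})
    (hbias : (fun n => tauCond (tl n) (tw n) (L n))
      =o[atTop] fun n => (Real.sqrt (N1 n * T1 (Sg n)))⁻¹) :
    -- Conclusion: τ̂(λ̃,ω̃) − τ = ε_{NT} − ε_{N:}ψ + o_p((N₁T₁)^{−1/2})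
    ∀ ε : ℝ, 0 < ε →
      Tendsto (fun n => μ n {ω : Ωt n | ε ≤
          |Real.sqrt (N1 n * T1 (Sg n)) *
            (tauCond (tl n) (tw n) (Ycond (L n) (τ n) (E n ω)) - τ n
              - (E n ω (Fin.last (N0 n)) (Fin.last (T0 n))
                  - ∑ s : Fin (T0 n),
                      E n ω (Fin.last (N0 n)) s.castSucc * psiC (Sg n) s))|})
        atTop (nhds 0) := by
  have hE : ∀ n, IsGaussianPanelNoise (μ n) (E n) (Sg n) (N1 n) := fun n =>
    ⟨hgaussCtrl n, hgaussLast n⟩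
  obtain ⟨_, c, _, hEig⟩ := hEig
  have hq : ∀ n (a : Fin (T0 n) → ℝ), a ⬝ᵥ (Scc (Sg n) *ᵥ a) ≤ max c 0 * (a ⬝ᵥ a) := fun n a =>
    (hEig n a).2.trans <| mul_le_mul_of_nonneg_right (le_max_left c 0)
      (by rw [dotProduct_self_eq_norm2_sq]; positivity)
  have hN1' : ∀ n, max (N1 n) 0 = N1 n := fun n => max_eq_left (hN1 n).le
  have hm : Tendsto (fun n => N1 n * norm2 (tw n) ^ 2) atTop (nhds 0) := by
    simpa only [hN1'] using tendsto_max_mul_sq_of_isLittleO_inv_sqrt hwSmall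
  have hs := tendsto_max_mul_sq_of_isLittleO_inv_sqrt hlSmall
  have hB := ((hs.const_mul (max c 0)).add ((hm.mul hs).const_mul (2 * max c 0))).add
    (hm.const_mul 2)
  simp only [mul_zero, add_zero] at hB
  intro ε hε
  simp_rw [tauCond_Ycond_sub_eq, mul_add]
  refine tendsto_measure_le_abs_add (tendsto_sqrt_mul_of_isLittleO_inv_sqrt hbias)
    (fun n => ?_) (fun n => ?_) ?_ hε
  · exact ((hE n).memLp_errorSum _).const_mul _
  · rw [integral_const_mul, (hE n).integral_errorSum, mul_zero]
  · exact squeeze_zero (fun n => variance_nonneg _ _) (fun n => variance_sqrt_mul_errorSum_le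
      (hrowindep n) (hE n) (hN1 n) (le_max_right c 0) (hq n) _ _) hB

/-- oracle asymptotic linearity: in the condensed panel setting with
independent Gaussian rows (covariance `Σ` for the control rows and `N₁⁻¹Σ` for the
last row, with the eigenvalues of `Σ_{::}` bounded and bounded away from zero), if the
deterministic simplex weights `ω̃, λ̃` satisfy `‖ω̃‖ = o(N₁^{−1/2})`,
`‖λ̃ − ψ‖ = o(T₁^{−1/2})` and the oracle bias condition
`L_{NT} − ω̃'L_{:T} − L_{N:}λ̃ + ω̃'L_{::}λ̃ = o((N₁T₁)^{−1/2})`, then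
`τ̂(λ̃,ω̃) − τ = ε_{NT} − ε_{N:}ψ + o_p((N₁T₁)^{−1/2})`. -/
theorem oracle_asymptotic_linearity
    (N0 T0 : ℕ → ℕ) (N1 : ℕ → ℝ) (hN1 : ∀ n, 0 < N1 n)
    (Ωt : ℕ → Type) [∀ n, MeasurableSpace (Ωt n)]
    (μ : ∀ n, Measure (Ωt n)) [∀ n, IsProbabilityMeasure (μ n)]
    (L : ∀ n, Matrix (Fin (N0 n + 1)) (Fin (T0 n + 1)) ℝ) (τ : ℕ → ℝ)
    (E : ∀ n, Ωt n → Matrix (Fin (N0 n + 1)) (Fin (T0 n + 1)) ℝ)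
    (Sg : ∀ n, Matrix (Fin (T0 n + 1)) (Fin (T0 n + 1)) ℝ)
    (hSgSymm : ∀ n, (Sg n)ᵀ = Sg n)
    -- rows are independent mean-zero Gaussian vectors, with covariance Σ for the
    -- first N₀ rows and N₁⁻¹Σ for the last row
    (hrowindep : ∀ n, iIndepFun (m := fun _ => inferInstance)
      (fun (i : Fin (N0 n + 1)) (ω : Ωt n) => fun t => E n ω i t) (μ n))
    (hgaussCtrl : ∀ n (i : Fin (N0 n)) (a : Fin (T0 n + 1) → ℝ),
      Measure.map (fun ω => ∑ t, a t * E n ω i.castSucc t) (μ n)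
        = gaussianReal 0 (Real.toNNReal (a ⬝ᵥ ((Sg n) *ᵥ a))))
    (hgaussLast : ∀ n (a : Fin (T0 n + 1) → ℝ),
      Measure.map (fun ω => ∑ t, a t * E n ω (Fin.last (N0 n)) t) (μ n)
        = gaussianReal 0 (Real.toNNReal ((N1 n)⁻¹ * (a ⬝ᵥ ((Sg n) *ᵥ a)))))
    -- eigenvalues of Σ_{::} bounded and bounded away from zero
    (hEig : ∃ c₁ c₂ : ℝ, 0 < c₁ ∧ ∀ n (a : Fin (T0 n) → ℝ),
      c₁ * (a ⬝ᵥ a) ≤ a ⬝ᵥ (Scc (Sg n) *ᵥ a) ∧ a ⬝ᵥ (Scc (Sg n) *ᵥ a) ≤ c₂ * (a ⬝ᵥ a))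
    -- deterministic simplex weights
    (tw : ∀ n, Fin (N0 n) → ℝ) (tl : ∀ n, Fin (T0 n) → ℝ)
    (htwMem : ∀ n, tw n ∈ simplex (N0 n)) (htlMem : ∀ n, tl n ∈ simplex (T0 n))
    (hwSmall : (fun n => norm2 (tw n)) =o[atTop] fun n => (Real.sqrt (N1 n))⁻¹)
    (hlSmall : (fun n => norm2 (tl n - psiC (Sg n)))
      =o[atTop] fun n => (Real.sqrt (T1 (Sg n)))⁻¹)
    -- oracle bias condition: L_{NT} − ω̃'L_{:T} − L_{N:}λ̃ + ω̃'L_{::}λ̃ = o((N₁T₁)^{−1/2})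
    (hbias : (fun n => tauCond (tl n) (tw n) (L n))
      =o[atTop] fun n => (Real.sqrt (N1 n * T1 (Sg n)))⁻¹) :
    -- Conclusion: τ̂(λ̃,ω̃) − τ = ε_{NT} − ε_{N:}ψ + o_p((N₁T₁)^{−1/2})
    ∀ ε : ℝ, 0 < ε →
      Tendsto (fun n => μ n {ω : Ωt n | ε ≤
          |Real.sqrt (N1 n * T1 (Sg n)) *
            (tauCond (tl n) (tw n) (Ycond (L n) (τ n) (E n ω)) - τ n
              - (E n ω (Fin.last (N0 n)) (Fin.last (T0 n))
                  - ∑ s : Fin (T0 n),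
                      E n ω (Fin.last (N0 n)) s.castSucc * psiC (Sg n) s))|})
        atTop (nhds 0) :=
  oracle_asymptotic_linearity_general N0 T0 N1 hN1 Ωt μ L τ E Sg hrowindep hgaussCtrl hgaussLast
    hEig tw tl hwSmall hlSmall hbias

end SDIDCond
end
end

section
/- Let A be a real m×n matrix with singular values σ₁(A) ≥ σ₂(A) ≥ … (setting σ_j(A) = 0 for j > min(m,n)), and let x ∈ ℝᵐ, y ∈ ℝⁿ satisfy ‖x'A‖ ≤ r_x, ‖Ay‖ ≤ r_y, ‖x‖ ≤ s_x, ‖y‖ ≤ s_y for nonnegative reals r_x, r_y, s_x, s_y. Then for every positive integer k with σ_k(A) > 0, |x'Ay| ≤ σ_k(A)^{−1}·r_x·r_y + σ_{k+1}(A)·s_x·s_y. -/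
/-! With `u = Uᵀx` and `v = Vᵀy`, orthogonality of `U` and `V` preserves all four norms and
gives `x'Ay = ∑ σ_{t+1} u_t v_t`, `‖x'A‖² = ∑ σ_{t+1}² u_t²`, `‖Ay‖² = ∑ σ_{t+1}² v_t²`.
Every `s = σ_{t+1}` is either `≥ σ_k` or `≤ σ_{k+1}`, hence `s ≤ σ_k⁻¹ s² + σ_{k+1}`;
multiplying by `|u_t v_t|`, summing, and applying Cauchy–Schwarz to both resulting sums
gives the bound. -/

open Matrix

noncomputable section

namespace SDID

/-- Euclidean norm of a finite vector. -/
def norm2 {k : ℕ} (v : Fin k → ℝ) : ℝ := Real.sqrt (∑ i, v i ^ 2)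

lemma le_inv_mul_sq_add {c d e : ℝ} (hc : 0 < c) (hd : 0 ≤ d) (he : 0 ≤ e)
    (h : c ≤ d ∨ d ≤ e) : d ≤ c⁻¹ * d ^ 2 + e := by
  rcases h with hcd | hde
  · have : d ≤ c⁻¹ * d ^ 2 := by
      rw [le_inv_mul_iff₀ hc, sq]
      exact mul_le_mul_of_nonneg_right hcd hd
    linarith
  · have : 0 ≤ c⁻¹ * d ^ 2 := by positivity
    linarith

theorem abs_sum_mul_mul_le {ι : Type*} (s : Finset ι) (d a b : ι → ℝ) {c e : ℝ}
    (hc : 0 < c) (he : 0 ≤ e) (hd : ∀ t ∈ s, 0 ≤ d t)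
    (hsplit : ∀ t ∈ s, c ≤ d t ∨ d t ≤ e) :
    |∑ t ∈ s, d t * a t * b t| ≤
      c⁻¹ * √(∑ t ∈ s, (d t * a t) ^ 2) * √(∑ t ∈ s, (d t * b t) ^ 2) +
        e * √(∑ t ∈ s, a t ^ 2) * √(∑ t ∈ s, b t ^ 2) := by
  have cs := fun f g : ι → ℝ => Real.sum_mul_le_sqrt_mul_sqrt s (fun t => |f t|) (fun t => |g t|)
  simp only [sq_abs] at cs
  calc |∑ t ∈ s, d t * a t * b t|
      ≤ ∑ t ∈ s, d t * (|a t| * |b t|) := by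
        refine (Finset.abs_sum_le_sum_abs _ _).trans (Finset.sum_le_sum fun t ht => ?_)
        rw [abs_mul, abs_mul, abs_of_nonneg (hd t ht), mul_assoc]
    _ ≤ ∑ t ∈ s, (c⁻¹ * (|d t * a t| * |d t * b t|) + e * (|a t| * |b t|)) := by
        refine Finset.sum_le_sum fun t ht => ?_
        have key := le_inv_mul_sq_add hc (hd t ht) he (hsplit t ht)
        calc d t * (|a t| * |b t|) ≤ (c⁻¹ * d t ^ 2 + e) * (|a t| * |b t|) := by gcongr
          _ = _ := by rw [abs_mul, abs_mul, abs_of_nonneg (hd t ht)]; ring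
    _ = c⁻¹ * ∑ t ∈ s, |d t * a t| * |d t * b t| + e * ∑ t ∈ s, |a t| * |b t| := by
        rw [Finset.sum_add_distrib, Finset.mul_sum, Finset.mul_sum]
    _ ≤ _ := by
        rw [mul_assoc, mul_assoc]
        gcongr
        exacts [cs _ _, cs _ _]

section RectDiag

variable {R : Type*} {m n : ℕ}

def rectDiag [Zero R] (m n : ℕ) (d : ℕ → R) : Matrix (Fin m) (Fin n) R :=
  of fun i j => if (i : ℕ) = j then d i else 0

lemma sum_ite_val_eq_extend [AddCommMonoid R] (w : Fin n → R) (t : ℕ) :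
    ∑ j : Fin n, (if (j : ℕ) = t then w j else 0) = Function.extend Fin.val w 0 t := by
  by_cases ht : t < n
  · have hval : ∀ j : Fin n, (j : ℕ) = t ↔ j = ⟨t, ht⟩ := fun j => by rw [Fin.ext_iff]
    simp only [hval, Finset.sum_ite_eq', Finset.mem_univ, if_true]
    exact (Fin.val_injective.extend_apply w 0 ⟨t, ht⟩).symm
  · have hne : ∀ j : Fin n, (j : ℕ) ≠ t := fun j => by have := j.isLt; omega
    rw [Function.extend_apply' _ _ _ fun ⟨j, hj⟩ => hne j hj]
    simp [hne]

lemma extend_val_eq_zero_of_le [Zero R] (w : Fin n → R) {t : ℕ} (ht : n ≤ t) :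
    Function.extend Fin.val w 0 t = 0 :=
  Function.extend_apply' _ _ _ fun ⟨j, hj⟩ => by have := j.isLt; omega

lemma sum_fin_eq_sum_range_extend {M : Type*} [Zero R] [AddCommMonoid M] (w : Fin m → R)
    (F : ℕ → R → M) :
    ∑ i : Fin m, F i (w i) = ∑ t ∈ Finset.range m, F t (Function.extend Fin.val w 0 t) := by
  rw [← Fin.sum_univ_eq_sum_range]
  simp only [Fin.val_injective.extend_apply]

variable [CommSemiring R]

lemma rectDiag_mulVec_apply (d : ℕ → R) (v : Fin n → R) (i : Fin m) :
    (rectDiag m n d *ᵥ v) i = d i * Function.extend Fin.val v 0 i := by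
  rw [mulVec, dotProduct, ← sum_ite_val_eq_extend v, Finset.mul_sum]
  refine Finset.sum_congr rfl fun j _ => ?_
  simp only [rectDiag, of_apply, eq_comm (a := (j : ℕ))]
  split_ifs <;> simp

lemma vecMul_rectDiag_apply (d : ℕ → R) (u : Fin m → R) (j : Fin n) :
    (u ᵥ* rectDiag m n d) j = d j * Function.extend Fin.val u 0 j := by
  rw [vecMul, dotProduct, ← sum_ite_val_eq_extend u, Finset.mul_sum]
  refine Finset.sum_congr rfl fun i _ => ?_
  simp only [rectDiag, of_apply]
  split_ifs with h <;> simp [h, mul_comm]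

lemma dotProduct_rectDiag_mulVec (d : ℕ → R) (u : Fin m → R) (v : Fin n → R) :
    u ⬝ᵥ (rectDiag m n d *ᵥ v) = ∑ t ∈ Finset.range (min m n),
      d t * Function.extend Fin.val u 0 t * Function.extend Fin.val v 0 t := by
  simp only [dotProduct, rectDiag_mulVec_apply]
  rw [sum_fin_eq_sum_range_extend u fun t a => a * (d t * Function.extend Fin.val v 0 t)]
  refine (Finset.sum_subset (Finset.range_subset_range.2 (min_le_left m n)) ?_).symm.trans
    (Finset.sum_congr rfl fun t _ => by ring)
  intro t htm htmin
  simp only [Finset.mem_range, lt_min_iff, not_and_or, not_lt] at htm htmin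
  rw [extend_val_eq_zero_of_le v (htmin.resolve_left (by omega)), mul_zero, mul_zero]

end RectDiag

section EuclideanNorm

variable {m n : ℕ}

lemma norm2_nonneg (w : Fin n → ℝ) : 0 ≤ norm2 w := Real.sqrt_nonneg _

lemma norm2_eq_sqrt_dotProduct (w : Fin n → ℝ) : norm2 w = √(w ⬝ᵥ w) := by
  simp only [norm2, dotProduct, sq]

lemma norm2_mulVec_of_transpose_mul_self {Q : Matrix (Fin n) (Fin n) ℝ} (hQ : Qᵀ * Q = 1)
    (w : Fin n → ℝ) : norm2 (Q *ᵥ w) = norm2 w := by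
  rw [norm2_eq_sqrt_dotProduct, norm2_eq_sqrt_dotProduct, dotProduct_mulVec,
    ← vecMul_transpose, vecMul_vecMul, hQ, vecMul_one]

lemma norm2_vecMul_of_transpose_mul_self {Q : Matrix (Fin n) (Fin n) ℝ} (hQ : Qᵀ * Q = 1)
    (w : Fin n → ℝ) : norm2 (w ᵥ* Q) = norm2 w := by
  rw [← mulVec_transpose]
  exact norm2_mulVec_of_transpose_mul_self (by rw [transpose_transpose, mul_eq_one_comm.mp hQ]) w

lemma norm2_eq_sqrt_sum_range (w : Fin m → ℝ) :
    norm2 w = √(∑ t ∈ Finset.range m, Function.extend Fin.val w 0 t ^ 2) := by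
  rw [norm2, sum_fin_eq_sum_range_extend w fun _ a => a ^ 2]

lemma norm2_rectDiag_mulVec (d : ℕ → ℝ) (v : Fin n → ℝ) :
    norm2 (rectDiag m n d *ᵥ v) =
      √(∑ t ∈ Finset.range m, (d t * Function.extend Fin.val v 0 t) ^ 2) := by
  simp only [norm2, rectDiag_mulVec_apply]
  rw [Fin.sum_univ_eq_sum_range fun t => (d t * Function.extend Fin.val v 0 t) ^ 2]

lemma norm2_vecMul_rectDiag (d : ℕ → ℝ) (u : Fin m → ℝ) :
    norm2 (u ᵥ* rectDiag m n d) =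
      √(∑ t ∈ Finset.range n, (d t * Function.extend Fin.val u 0 t) ^ 2) := by
  simp only [norm2, vecMul_rectDiag_apply]
  rw [Fin.sum_univ_eq_sum_range fun t => (d t * Function.extend Fin.val u 0 t) ^ 2]

theorem abs_dotProduct_rectDiag_mulVec_le (d : ℕ → ℝ) {c e : ℝ} (hc : 0 < c) (he : 0 ≤ e)
    (hd : ∀ t, 0 ≤ d t) (hsplit : ∀ t, c ≤ d t ∨ d t ≤ e) (u : Fin m → ℝ) (v : Fin n → ℝ) :
    |u ⬝ᵥ (rectDiag m n d *ᵥ v)| ≤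
      c⁻¹ * norm2 (u ᵥ* rectDiag m n d) * norm2 (rectDiag m n d *ᵥ v) +
        e * norm2 u * norm2 v := by
  rw [dotProduct_rectDiag_mulVec, norm2_vecMul_rectDiag, norm2_rectDiag_mulVec,
    norm2_eq_sqrt_sum_range u, norm2_eq_sqrt_sum_range v]
  refine (abs_sum_mul_mul_le _ d _ _ hc he (fun t _ => hd t) (fun t _ => hsplit t)).trans ?_
  gcongr <;> omega

end EuclideanNorm

theorem singular_value_bilinear_bound_general (m n : ℕ)
    (A : Matrix (Fin m) (Fin n) ℝ) (σ : ℕ → ℝ)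
    (U : Matrix (Fin m) (Fin m) ℝ) (V : Matrix (Fin n) (Fin n) ℝ)
    (hU : Uᵀ * U = 1) (hV : Vᵀ * V = 1)
    (hA : A = U * (Matrix.of fun (i : Fin m) (j : Fin n) =>
        if (i : ℕ) = (j : ℕ) then σ ((i : ℕ) + 1) else 0) * Vᵀ)
    (hmono : ∀ j k : ℕ, j ≤ k → σ k ≤ σ j)
    (hnonneg : ∀ j, 0 ≤ σ j)
    (x : Fin m → ℝ) (y : Fin n → ℝ) (rx ry sx sy : ℝ)
    (hrx : norm2 (A.vecMul x) ≤ rx) (hry : norm2 (A *ᵥ y) ≤ ry)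
    (hsx : norm2 x ≤ sx) (hsy : norm2 y ≤ sy)
    (k : ℕ) (hσk : 0 < σ k) :
    |x ⬝ᵥ (A *ᵥ y)| ≤ (σ k)⁻¹ * rx * ry + σ (k + 1) * sx * sy := by
  set D := rectDiag m n fun t => σ (t + 1)
  replace hA : A = U * D * Vᵀ := hA
  have hsplit : ∀ t, σ k ≤ σ (t + 1) ∨ σ (t + 1) ≤ σ (k + 1) := fun t =>
    (le_or_gt (t + 1) k).imp (hmono _ _) (fun h => hmono _ _ (by omega))
  have hdot : x ⬝ᵥ (A *ᵥ y) = (x ᵥ* U) ⬝ᵥ (D *ᵥ (y ᵥ* V)) := by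
    rw [hA, ← mulVec_mulVec, ← mulVec_mulVec, dotProduct_mulVec, mulVec_transpose]
  have hxA : norm2 (x ᵥ* A) = norm2 ((x ᵥ* U) ᵥ* D) := by
    rw [hA, ← vecMul_vecMul, ← vecMul_vecMul, vecMul_transpose,
      norm2_mulVec_of_transpose_mul_self hV]
  have hAy : norm2 (A *ᵥ y) = norm2 (D *ᵥ (y ᵥ* V)) := by
    rw [hA, ← mulVec_mulVec, ← mulVec_mulVec, mulVec_transpose,
      norm2_mulVec_of_transpose_mul_self hU]
  have bound := abs_dotProduct_rectDiag_mulVec_le _ hσk (hnonneg _) (fun t => hnonneg _) hsplit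
    (x ᵥ* U) (y ᵥ* V)
  rw [← hdot, ← hxA, ← hAy, norm2_vecMul_of_transpose_mul_self hU,
    norm2_vecMul_of_transpose_mul_self hV] at bound
  have hσk_succ := hnonneg (k + 1)
  have hrx0 := (norm2_nonneg _).trans hrx
  have hsx0 := (norm2_nonneg _).trans hsx
  refine bound.trans ?_
  gcongr <;> exact norm2_nonneg _

/-- let `A` have singular values `σ 1 ≥ σ 2 ≥ …` (here exhibited via a
singular value decomposition `A = U D Vᵀ`, with `σ j = 0` for `j > min m n`), and let
`x, y` satisfy `‖x'A‖ ≤ r_x`, `‖Ay‖ ≤ r_y`, `‖x‖ ≤ s_x`, `‖y‖ ≤ s_y`.  Then for every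
positive integer `k` with `σ k > 0`,
`|x'Ay| ≤ σ k⁻¹·r_x·r_y + σ (k+1)·s_x·s_y`. -/
theorem singular_value_bilinear_bound (m n : ℕ)
    (A : Matrix (Fin m) (Fin n) ℝ) (σ : ℕ → ℝ)
    (U : Matrix (Fin m) (Fin m) ℝ) (V : Matrix (Fin n) (Fin n) ℝ)
    (hU : Uᵀ * U = 1) (hV : Vᵀ * V = 1)
    (hA : A = U * (Matrix.of fun (i : Fin m) (j : Fin n) =>
        if (i : ℕ) = (j : ℕ) then σ ((i : ℕ) + 1) else 0) * Vᵀ)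
    (hmono : ∀ j k : ℕ, j ≤ k → σ k ≤ σ j)
    (hnonneg : ∀ j, 0 ≤ σ j)
    (hzero : ∀ j, min m n < j → σ j = 0)
    (x : Fin m → ℝ) (y : Fin n → ℝ) (rx ry sx sy : ℝ)
    (hrx : norm2 (A.vecMul x) ≤ rx) (hry : norm2 (A *ᵥ y) ≤ ry)
    (hsx : norm2 x ≤ sx) (hsy : norm2 y ≤ sy)
    (k : ℕ) (hk : 1 ≤ k) (hσk : 0 < σ k) :
    |x ⬝ᵥ (A *ᵥ y)| ≤ (σ k)⁻¹ * rx * ry + σ (k + 1) * sx * sy :=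
  singular_value_bilinear_bound_general m n A σ U V hU hV hA hmono hnonneg x y rx ry sx sy hrx hry
    hsx hsy k hσk

end SDID
end
end

section
/- In the block panel design, the bias term B(ω,λ) = ω_tr'L_{tr,post}λ_post − ω_co'L_{co,post}λ_post − ω_tr'L_{tr,pre}λ_pre + ω_co'L_{co,pre}λ_pre vanishes for ω ∈ Ω and λ ∈ Λ under either of the following conditions (double robustness): (a) the unit weights exactly balance L up to a constant, i.e. there exists c ∈ ℝ with ω_tr'L_{tr,t} − ω_co'L_{co,t} = c for every time period t; or (b) the time weights exactly balance L up to a constant, i.e. there exists d ∈ ℝ with L_{i,post}λ_post − L_{i,pre}λ_pre = d for every unit i. In particular, if L is additive, L_{it} = α_i + β_t for some vectors α, β, then B(ω,λ) = 0 for all ω ∈ Ω and λ ∈ Λ. -/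
open Filter MeasureTheory ProbabilityTheory Matrix Real Asymptotics

/-! The bias `B(ω, λ)` is bilinear in `(ω, λ)`. Summing first over units writes it as the
post-minus-pre `λ`-contrast of the column-wise unit contrasts `ω_tr'L_{tr,t} − ω_co'L_{co,t}`;
summing first over periods writes it as the treated-minus-control `ω`-contrast of the row-wise time
contrasts `L_{i,post}λ_post − L_{i,pre}λ_pre`. A contrast of a constant vanishes because the
post and pre blocks of `λ`, and the treated and control blocks of `ω`, each have mass one. An
additive `L` has constant unit contrasts, since `ω_tr` and `ω_co` have equal mass. -/

noncomputable section

namespace SDID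

/-- The set Ω of unit weights: nonnegative, control weights sum to one,
treated weights all equal to `1/N_tr`. -/
def OmegaSet (Nco Ntr : ℕ) : Set (Fin (Nco + Ntr) → ℝ) :=
  {w | (∀ i, 0 ≤ w i) ∧ (∑ i : Fin Nco, w (Fin.castAdd Ntr i)) = 1 ∧
    ∀ i : Fin Ntr, w (Fin.natAdd Nco i) = (Ntr : ℝ)⁻¹}

/-- The set Λ of time weights: nonnegative, pre-treatment weights sum to one,
post-treatment weights all equal to `1/T_post`. -/
def LambdaSet (Tpre Tpost : ℕ) : Set (Fin (Tpre + Tpost) → ℝ) :=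
  {l | (∀ t, 0 ≤ l t) ∧ (∑ t : Fin Tpre, l (Fin.castAdd Tpost t)) = 1 ∧
    ∀ t : Fin Tpost, l (Fin.natAdd Tpre t) = (Tpost : ℝ)⁻¹}

/-- Weighted double-differencing estimator
`τ̂(ω,λ) = ω_tr'Y_{tr,post}λ_post − ω_co'Y_{co,post}λ_post − ω_tr'Y_{tr,pre}λ_pre + ω_co'Y_{co,pre}λ_pre`. -/
def tauWDD {Nco Ntr Tpre Tpost : ℕ} (w : Fin (Nco + Ntr) → ℝ) (l : Fin (Tpre + Tpost) → ℝ)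
    (Y : Matrix (Fin (Nco + Ntr)) (Fin (Tpre + Tpost)) ℝ) : ℝ :=
  (∑ i : Fin Ntr, ∑ t : Fin Tpost,
      w (Fin.natAdd Nco i) * Y (Fin.natAdd Nco i) (Fin.natAdd Tpre t) * l (Fin.natAdd Tpre t))
  - (∑ i : Fin Nco, ∑ t : Fin Tpost,
      w (Fin.castAdd Ntr i) * Y (Fin.castAdd Ntr i) (Fin.natAdd Tpre t) * l (Fin.natAdd Tpre t))
  - (∑ i : Fin Ntr, ∑ t : Fin Tpre,
      w (Fin.natAdd Nco i) * Y (Fin.natAdd Nco i) (Fin.castAdd Tpost t) * l (Fin.castAdd Tpost t))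
  + (∑ i : Fin Nco, ∑ t : Fin Tpre,
      w (Fin.castAdd Ntr i) * Y (Fin.castAdd Ntr i) (Fin.castAdd Tpost t) * l (Fin.castAdd Tpost t))

/-- Block treatment assignment indicator `W_{it} = 1{i > N_co, t > T_pre}`. -/
def Wind (Nco Ntr Tpre Tpost : ℕ) : Matrix (Fin (Nco + Ntr)) (Fin (Tpre + Tpost)) ℝ :=
  fun i t => if Nco ≤ (i : ℕ) ∧ Tpre ≤ (t : ℕ) then 1 else 0

/-- Outcome matrix `Y = L + W ∘ τ + E`. -/
def Ymat {Nco Ntr Tpre Tpost : ℕ} (L τm Em : Matrix (Fin (Nco + Ntr)) (Fin (Tpre + Tpost)) ℝ) :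
    Matrix (Fin (Nco + Ntr)) (Fin (Tpre + Tpost)) ℝ :=
  fun i t => L i t + Wind Nco Ntr Tpre Tpost i t * τm i t + Em i t

/-- The estimand: average treatment effect on treated cells. -/
def taubar {Nco Ntr Tpre Tpost : ℕ} (τm : Matrix (Fin (Nco + Ntr)) (Fin (Tpre + Tpost)) ℝ) : ℝ :=
  ((Ntr : ℝ) * Tpost)⁻¹ *
    ∑ i : Fin Ntr, ∑ t : Fin Tpost, τm (Fin.natAdd Nco i) (Fin.natAdd Tpre t)

theorem sum_eq_one_of_forall_eq_inv_card {n : ℕ} (hn : 0 < n) {f : Fin n → ℝ}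
    (hf : ∀ i, f i = (n : ℝ)⁻¹) : ∑ i, f i = 1 := by
  simp [hf, hn.ne']

theorem sum_natAdd_mul_sub_sum_castAdd_mul_eq_zero {m n : ℕ} {u v : Fin (m + n) → ℝ} {c : ℝ}
    (hu : ∀ k, u k = c) (hpost : ∑ i : Fin n, v (Fin.natAdd m i) = 1)
    (hpre : ∑ i : Fin m, v (Fin.castAdd n i) = 1) :
    ∑ i : Fin n, u (Fin.natAdd m i) * v (Fin.natAdd m i)
      - ∑ i : Fin m, u (Fin.castAdd n i) * v (Fin.castAdd n i) = 0 := by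
  simp only [hu, ← Finset.mul_sum, hpost, hpre, sub_self]

section Contrasts

variable {Nco Ntr Tpre Tpost : ℕ}

def unitContrast (w : Fin (Nco + Ntr) → ℝ)
    (L : Matrix (Fin (Nco + Ntr)) (Fin (Tpre + Tpost)) ℝ) (t : Fin (Tpre + Tpost)) : ℝ :=
  (∑ i : Fin Ntr, w (Fin.natAdd Nco i) * L (Fin.natAdd Nco i) t)
    - ∑ i : Fin Nco, w (Fin.castAdd Ntr i) * L (Fin.castAdd Ntr i) t

def timeContrast (l : Fin (Tpre + Tpost) → ℝ)
    (L : Matrix (Fin (Nco + Ntr)) (Fin (Tpre + Tpost)) ℝ) (i : Fin (Nco + Ntr)) : ℝ :=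
  (∑ t : Fin Tpost, L i (Fin.natAdd Tpre t) * l (Fin.natAdd Tpre t))
    - ∑ t : Fin Tpre, L i (Fin.castAdd Tpost t) * l (Fin.castAdd Tpost t)

theorem tauWDD_eq_sum_unitContrast_mul (w : Fin (Nco + Ntr) → ℝ)
    (l : Fin (Tpre + Tpost) → ℝ) (L : Matrix (Fin (Nco + Ntr)) (Fin (Tpre + Tpost)) ℝ) :
    tauWDD w l L = ∑ t : Fin Tpost, unitContrast w L (Fin.natAdd Tpre t) * l (Fin.natAdd Tpre t)
      - ∑ t : Fin Tpre, unitContrast w L (Fin.castAdd Tpost t) * l (Fin.castAdd Tpost t) := by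
  simp only [tauWDD, unitContrast, sub_mul, Finset.sum_sub_distrib, Finset.sum_mul]
  rw [Finset.sum_comm (γ := Fin Ntr), Finset.sum_comm (γ := Fin Nco),
    Finset.sum_comm (γ := Fin Ntr), Finset.sum_comm (γ := Fin Nco)]
  ring

theorem tauWDD_eq_sum_timeContrast_mul (w : Fin (Nco + Ntr) → ℝ)
    (l : Fin (Tpre + Tpost) → ℝ) (L : Matrix (Fin (Nco + Ntr)) (Fin (Tpre + Tpost)) ℝ) :
    tauWDD w l L = ∑ i : Fin Ntr, timeContrast l L (Fin.natAdd Nco i) * w (Fin.natAdd Nco i)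
      - ∑ i : Fin Nco, timeContrast l L (Fin.castAdd Ntr i) * w (Fin.castAdd Ntr i) := by
  simp only [tauWDD, timeContrast, sub_mul, Finset.sum_sub_distrib, Finset.sum_mul,
    mul_right_comm _ _ (w _), mul_comm (L _ _) (w _)]
  ring

theorem unitContrast_eq_of_additive {w : Fin (Nco + Ntr) → ℝ}
    {L : Matrix (Fin (Nco + Ntr)) (Fin (Tpre + Tpost)) ℝ} {a : Fin (Nco + Ntr) → ℝ}
    {b : Fin (Tpre + Tpost) → ℝ} (hab : ∀ i t, L i t = a i + b t)
    (hw : ∑ i : Fin Ntr, w (Fin.natAdd Nco i) = ∑ i : Fin Nco, w (Fin.castAdd Ntr i))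
    (t : Fin (Tpre + Tpost)) :
    unitContrast w L t = (∑ i : Fin Ntr, w (Fin.natAdd Nco i) * a (Fin.natAdd Nco i))
      - ∑ i : Fin Nco, w (Fin.castAdd Ntr i) * a (Fin.castAdd Ntr i) := by
  simp only [unitContrast, hab, mul_add, Finset.sum_add_distrib, ← Finset.sum_mul, hw]
  ring

end Contrasts

/-- double robustness of the bias term.  `B(ω,λ) = tauWDD w l L`
vanishes if (a) the unit weights balance `L` up to a constant across all time periods,
or (b) the time weights balance `L` up to a constant across all units; in particular
it vanishes whenever `L` is additive, `L i t = α i + β t`. -/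
theorem bias_double_robustness {Nco Ntr Tpre Tpost : ℕ}
    (hNtr : 1 ≤ Ntr) (hTpost : 1 ≤ Tpost)
    (L : Matrix (Fin (Nco + Ntr)) (Fin (Tpre + Tpost)) ℝ)
    (w : Fin (Nco + Ntr) → ℝ) (l : Fin (Tpre + Tpost) → ℝ)
    (hw : w ∈ OmegaSet Nco Ntr) (hl : l ∈ LambdaSet Tpre Tpost) :
    ((∃ c : ℝ, ∀ t : Fin (Tpre + Tpost),
        (∑ i : Fin Ntr, w (Fin.natAdd Nco i) * L (Fin.natAdd Nco i) t)
          - (∑ i : Fin Nco, w (Fin.castAdd Ntr i) * L (Fin.castAdd Ntr i) t) = c) →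
      tauWDD w l L = 0)
    ∧ ((∃ d : ℝ, ∀ i : Fin (Nco + Ntr),
        (∑ t : Fin Tpost, L i (Fin.natAdd Tpre t) * l (Fin.natAdd Tpre t))
          - (∑ t : Fin Tpre, L i (Fin.castAdd Tpost t) * l (Fin.castAdd Tpost t)) = d) →
      tauWDD w l L = 0)
    ∧ ((∃ (a : Fin (Nco + Ntr) → ℝ) (b : Fin (Tpre + Tpost) → ℝ),
        ∀ i t, L i t = a i + b t) →
      tauWDD w l L = 0) := by
  obtain ⟨-, hw_co, hw_tr⟩ := hw
  obtain ⟨-, hl_pre, hl_post⟩ := hl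
  have hw_tr_sum := sum_eq_one_of_forall_eq_inv_card hNtr hw_tr
  have hl_post_sum := sum_eq_one_of_forall_eq_inv_card hTpost hl_post
  have unit_balance : (∃ c, ∀ t, unitContrast w L t = c) → tauWDD w l L = 0 := by
    rintro ⟨c, hc⟩
    rw [tauWDD_eq_sum_unitContrast_mul]
    exact sum_natAdd_mul_sub_sum_castAdd_mul_eq_zero hc hl_post_sum hl_pre
  have time_balance : (∃ d, ∀ i, timeContrast l L i = d) → tauWDD w l L = 0 := by
    rintro ⟨d, hd⟩
    rw [tauWDD_eq_sum_timeContrast_mul]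
    exact sum_natAdd_mul_sub_sum_castAdd_mul_eq_zero hd hw_tr_sum hw_co
  refine ⟨unit_balance, time_balance, ?_⟩
  rintro ⟨a, b, hab⟩
  exact unit_balance ⟨_, unitContrast_eq_of_additive hab (hw_tr_sum.trans hw_co.symm)⟩

end SDID
end
end

section
/- In the block panel design, suppose Y = L + W∘τ + E where the rows E_{i·} are independent mean-zero random vectors with common covariance matrix Σ ∈ ℝ^{T×T}. Then the expected unit-weight objective satisfies, for all ω₀ ∈ ℝ and ω ∈ Ω, E ℓ_unit(ω₀,ω) = ‖ω₀·1_{T_pre} + (L_{co,pre}'ω_co − L_{tr,pre}'ω_tr)‖² + (trace(Σ_{pre,pre}) + ζ²T_pre)·‖ω_co‖² + c, where c = N_tr^{−1}·trace(Σ_{pre,pre}) + ζ²T_pre/N_tr does not depend on (ω₀, ω_co). Consequently, the minimizers of E ℓ_unit over ℝ×Ω coincide with the minimizers of ‖ω₀·1_{T_pre} + L_{co,pre}'ω_co − L_{tr,pre}'ω_tr‖² + (trace(Σ_{pre,pre}) + ζ²T_pre)‖ω_co‖². -/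
/-!
In the pre-treatment period `W = 0`, so `Y = L + E` there, and for `ω ∈ Ω` the residual of the
unit-weight fit at time `t` is `a_t + ∑ᵢ cᵢ E_{it}`, where `a_t` is the same residual computed
from `L` and `c = (ω_co, -ω_tr)`. The rows of `E` are independent and centred, so the cross terms
vanish in expectation and `E (a_t + ∑ᵢ cᵢ E_{it})² = a_t² + ‖c‖² Σ_{tt}`; summing over `t` yields
`‖ω‖² tr Σ_{pre,pre}`. On `Ω` the treated weights are all `1/N_tr`, so `‖ω‖² = ‖ω_co‖² + 1/N_tr`,
which splits off the constant. Objectives differing by a constant have the same minimizers.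
-/

open Filter MeasureTheory ProbabilityTheory Matrix Real Asymptotics

noncomputable section

namespace SDID

/-- The synthetic-control unit-weight objective `ℓ_unit`. -/
def ellUnit {Nco Ntr Tpre Tpost : ℕ} (ζ : ℝ)
    (Y : Matrix (Fin (Nco + Ntr)) (Fin (Tpre + Tpost)) ℝ)
    (w0 : ℝ) (w : Fin (Nco + Ntr) → ℝ) : ℝ :=
  (∑ t : Fin Tpre,
    (w0 + (∑ i : Fin Nco, w (Fin.castAdd Ntr i) * Y (Fin.castAdd Ntr i) (Fin.castAdd Tpost t))
      - (Ntr : ℝ)⁻¹ * ∑ i : Fin Ntr, Y (Fin.natAdd Nco i) (Fin.castAdd Tpost t)) ^ 2)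
  + ζ ^ 2 * Tpre * ∑ i, w i ^ 2

/-- trace of the pre-pre block of `Σ`. -/
def traceSpp {Tpre Tpost : ℕ} (S : Matrix (Fin (Tpre + Tpost)) (Fin (Tpre + Tpost)) ℝ) : ℝ :=
  ∑ t : Fin Tpre, S (Fin.castAdd Tpost t) (Fin.castAdd Tpost t)

/-- The deterministic surrogate objective for the unit weights
`g(ω₀,ω) = ‖ω₀·1 + L_{co,pre}'ω_co − L_{tr,pre}'ω_tr‖² + (tr Σ_{pre,pre} + ζ²T_pre)‖ω_co‖²`. -/
def ellUnitOracle {Nco Ntr Tpre Tpost : ℕ} (ζ : ℝ)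
    (S : Matrix (Fin (Tpre + Tpost)) (Fin (Tpre + Tpost)) ℝ)
    (L : Matrix (Fin (Nco + Ntr)) (Fin (Tpre + Tpost)) ℝ)
    (w0 : ℝ) (w : Fin (Nco + Ntr) → ℝ) : ℝ :=
  (∑ t : Fin Tpre,
    (w0 + (∑ i : Fin Nco, w (Fin.castAdd Ntr i) * L (Fin.castAdd Ntr i) (Fin.castAdd Tpost t))
      - ∑ i : Fin Ntr, w (Fin.natAdd Nco i) * L (Fin.natAdd Nco i) (Fin.castAdd Tpost t)) ^ 2)
  + (traceSpp S + ζ ^ 2 * Tpre) * ∑ i : Fin Nco, w (Fin.castAdd Ntr i) ^ 2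

theorem _root_.ProbabilityTheory.integral_sq_const_add_sum_of_pairwise_indepFun
    {Ω ι : Type*} [MeasurableSpace Ω] {μ : Measure Ω} [IsProbabilityMeasure μ] [Fintype ι]
    {X : ι → Ω → ℝ} (hX : ∀ i, MemLp (X i) 2 μ) (hindep : Pairwise fun i j => X i ⟂ᵢ[μ] X j)
    (hmean : ∀ i, μ[X i] = 0) (a : ℝ) (c : ι → ℝ) :
    ∫ ω, (a + ∑ i, c i * X i ω) ^ 2 ∂μ = a ^ 2 + ∑ i, c i ^ 2 * ∫ ω, X i ω ^ 2 ∂μ := by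
  set Y : ι → Ω → ℝ := fun i ω => c i * X i ω
  set Z : Ω → ℝ := fun ω => ∑ i, Y i ω
  have hY : ∀ i, MemLp (Y i) 2 μ := fun i => (hX i).const_mul (c i)
  have hZ : MemLp Z 2 μ := memLp_finsetSum _ fun i _ => hY i
  have hZint : Integrable Z μ := hZ.integrable one_le_two
  have hZmean : μ[Z] = 0 := by
    rw [integral_finsetSum _ fun i _ => (hY i).integrable one_le_two]
    simp [Y, integral_const_mul, hmean]
  have hZvar : Var[Z; μ] = ∑ i, c i ^ 2 * ∫ ω, X i ω ^ 2 ∂μ := by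
    rw [show Z = ∑ i, Y i by ext; simp [Z], IndepFun.variance_sum (fun i _ => hY i)
      fun i _ j _ hij => (hindep hij).comp (measurable_const_mul _) (measurable_const_mul _)]
    refine Finset.sum_congr rfl fun i _ => ?_
    rw [variance_const_mul,
      variance_of_integral_eq_zero (hX i).aestronglyMeasurable.aemeasurable (hmean i)]
  calc ∫ ω, (a + Z ω) ^ 2 ∂μ = ∫ ω, (a ^ 2 + 2 * a * Z ω) + Z ω ^ 2 ∂μ := by
        congr 1; funext ω; ring
    _ = a ^ 2 + 2 * a * μ[Z] + ∫ ω, Z ω ^ 2 ∂μ := by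
        rw [integral_add (f := fun ω => a ^ 2 + 2 * a * Z ω)
            ((integrable_const _).add (hZint.const_mul _)) hZ.integrable_sq,
          integral_add (integrable_const _) (hZint.const_mul _), integral_const_mul]
        simp
    _ = a ^ 2 + ∑ i, c i ^ 2 * ∫ ω, X i ω ^ 2 ∂μ := by
        rw [hZmean, ← hZvar,
          variance_of_integral_eq_zero hZ.aestronglyMeasurable.aemeasurable hZmean]
        ring

theorem _root_.ProbabilityTheory.iIndepFun.pairwise_indepFun_apply {Ω ι κ β : Type*}
    [MeasurableSpace Ω] {μ : Measure Ω} [MeasurableSpace β] {E : ι → κ → Ω → β}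
    (h : iIndepFun (fun i ω k => E i k ω) μ) (k : κ) :
    Pairwise fun i j => E i k ⟂ᵢ[μ] E j k := fun _ _ hij =>
  (h.indepFun hij).comp (measurable_pi_apply k) (measurable_pi_apply k)

theorem _root_.isMinOn_iff_of_eqOn_add_const {α β : Type*} [AddCommGroup β] [PartialOrder β]
    [IsOrderedAddMonoid β] {f g : α → β} {s : Set α} {a : α} (c : β)
    (h : Set.EqOn f (fun x => g x + c) s) (ha : a ∈ s) :
    IsMinOn f s a ↔ IsMinOn g s a := by
  simp only [isMinOn_iff]
  refine forall₂_congr fun x hx => ?_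
  rw [h ha, h hx, add_le_add_iff_right]

section

variable {Nco Ntr Tpre Tpost : ℕ}

def signedWeights (w : Fin (Nco + Ntr) → ℝ) : Fin (Nco + Ntr) → ℝ :=
  Fin.addCases (fun i => w (Fin.castAdd Ntr i)) (fun j => -w (Fin.natAdd Nco j))

theorem sum_signedWeights_mul (w y : Fin (Nco + Ntr) → ℝ) :
    ∑ i, signedWeights w i * y i
      = ∑ i : Fin Nco, w (Fin.castAdd Ntr i) * y (Fin.castAdd Ntr i)
        - ∑ j : Fin Ntr, w (Fin.natAdd Nco j) * y (Fin.natAdd Nco j) := by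
  simp [signedWeights, Fin.sum_univ_add, sub_eq_add_neg]

theorem sum_signedWeights_sq (w : Fin (Nco + Ntr) → ℝ) :
    ∑ i, signedWeights w i ^ 2 = ∑ i, w i ^ 2 := by
  simp [signedWeights, Fin.sum_univ_add]

theorem sum_sq_of_mem_OmegaSet {w : Fin (Nco + Ntr) → ℝ} (hw : w ∈ OmegaSet Nco Ntr) :
    ∑ i, w i ^ 2 = ∑ i : Fin Nco, w (Fin.castAdd Ntr i) ^ 2 + (Ntr : ℝ)⁻¹ := by
  have hN : (Ntr : ℝ) * ((Ntr : ℝ) ^ 2)⁻¹ = (Ntr : ℝ)⁻¹ := by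
    rcases eq_or_ne (Ntr : ℝ) 0 with h | h
    · simp [h]
    · field_simp
  simp [Fin.sum_univ_add, hw.2.2, hN]

theorem ellUnit_eq_of_mem_OmegaSet (ζ : ℝ) (Y : Matrix (Fin (Nco + Ntr)) (Fin (Tpre + Tpost)) ℝ)
    (w0 : ℝ) {w : Fin (Nco + Ntr) → ℝ} (hw : w ∈ OmegaSet Nco Ntr) :
    ellUnit ζ Y w0 w
      = ∑ t : Fin Tpre, (w0 + ∑ i, signedWeights w i * Y i (Fin.castAdd Tpost t)) ^ 2
        + ζ ^ 2 * Tpre * ∑ i, w i ^ 2 := by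
  simp only [ellUnit, sum_signedWeights_mul, hw.2.2, Finset.mul_sum, add_sub_assoc]

theorem ellUnitOracle_eq (ζ : ℝ) (S : Matrix (Fin (Tpre + Tpost)) (Fin (Tpre + Tpost)) ℝ)
    (L : Matrix (Fin (Nco + Ntr)) (Fin (Tpre + Tpost)) ℝ) (w0 : ℝ) (w : Fin (Nco + Ntr) → ℝ) :
    ellUnitOracle ζ S L w0 w
      = ∑ t : Fin Tpre, (w0 + ∑ i, signedWeights w i * L i (Fin.castAdd Tpost t)) ^ 2
        + (traceSpp S + ζ ^ 2 * Tpre) * ∑ i : Fin Nco, w (Fin.castAdd Ntr i) ^ 2 := by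
  simp only [ellUnitOracle, sum_signedWeights_mul, add_sub_assoc]

theorem Ymat_castAdd (L τm Em : Matrix (Fin (Nco + Ntr)) (Fin (Tpre + Tpost)) ℝ)
    (i : Fin (Nco + Ntr)) (t : Fin Tpre) :
    Ymat L τm Em i (Fin.castAdd Tpost t)
      = L i (Fin.castAdd Tpost t) + Em i (Fin.castAdd Tpost t) := by
  simp [Ymat, Wind]

theorem integral_ellUnit_Ymat {Ωt : Type*} [MeasurableSpace Ωt] {μ : Measure Ωt}
    [IsProbabilityMeasure μ] (L τm : Matrix (Fin (Nco + Ntr)) (Fin (Tpre + Tpost)) ℝ)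
    {E : Fin (Nco + Ntr) → Fin (Tpre + Tpost) → Ωt → ℝ}
    (S : Matrix (Fin (Tpre + Tpost)) (Fin (Tpre + Tpost)) ℝ) (ζ : ℝ)
    (hrowindep : iIndepFun (fun i ω t => E i t ω) μ)
    (hint : ∀ i t, Integrable (E i t) μ)
    (hmean : ∀ i t, ∫ ω, E i t ω ∂μ = 0)
    (hcovint : ∀ i t, Integrable (fun ω => E i t ω * E i t ω) μ)
    (hcov : ∀ i t, ∫ ω, E i t ω * E i t ω ∂μ = S t t)
    (w0 : ℝ) {w : Fin (Nco + Ntr) → ℝ} (hw : w ∈ OmegaSet Nco Ntr) :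
    ∫ ω, ellUnit ζ (Ymat L τm (fun i t => E i t ω)) w0 w ∂μ
      = ellUnitOracle ζ S L w0 w + ((Ntr : ℝ)⁻¹ * traceSpp S + ζ ^ 2 * Tpre / Ntr) := by
  set c := signedWeights w
  set signal : Fin Tpre → ℝ := fun t => w0 + ∑ i, c i * L i (Fin.castAdd Tpost t)
  set noise : Fin Tpre → Ωt → ℝ := fun t ω => ∑ i, c i * E i (Fin.castAdd Tpost t) ω
  have hmemLp : ∀ i t, MemLp (E i t) 2 μ := fun i t =>
    (memLp_two_iff_integrable_sq (hint i t).aestronglyMeasurable).2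
      (by simpa [sq] using hcovint i t)
  have hnoise : ∀ t, MemLp (noise t) 2 μ := fun t =>
    memLp_finsetSum _ fun i _ => (hmemLp i _).const_mul (c i)
  have hsqint : ∀ t, Integrable (fun ω => (signal t + noise t ω) ^ 2) μ := fun t =>
    ((memLp_const (signal t)).add (hnoise t)).integrable_sq
  have hsq : ∀ t, ∫ ω, (signal t + noise t ω) ^ 2 ∂μ
      = signal t ^ 2 + (∑ i, c i ^ 2) * S (Fin.castAdd Tpost t) (Fin.castAdd Tpost t) := by
    intro t
    rw [integral_sq_const_add_sum_of_pairwise_indepFun (fun i => hmemLp i _)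
      (hrowindep.pairwise_indepFun_apply _) (fun i => hmean i _), Finset.sum_mul]
    simp only [sq, hcov]
  have hresidual : ∀ ω t,
      w0 + ∑ i, c i * Ymat L τm (fun i t => E i t ω) i (Fin.castAdd Tpost t)
        = signal t + noise t ω := by
    intro ω t
    simp only [signal, noise, Ymat_castAdd L τm (fun i t => E i t ω), mul_add,
      Finset.sum_add_distrib, add_assoc]
  calc ∫ ω, ellUnit ζ (Ymat L τm (fun i t => E i t ω)) w0 w ∂μ
      = ∫ ω, (∑ t, (signal t + noise t ω) ^ 2) + ζ ^ 2 * Tpre * ∑ i, w i ^ 2 ∂μ := by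
        simp only [ellUnit_eq_of_mem_OmegaSet ζ _ w0 hw, hresidual, c]
    _ = ∑ t, (signal t ^ 2 + (∑ i, c i ^ 2) * S (Fin.castAdd Tpost t) (Fin.castAdd Tpost t))
          + ζ ^ 2 * Tpre * ∑ i, w i ^ 2 := by
        rw [integral_add (integrable_finsetSum _ fun t _ => hsqint t) (integrable_const _),
          integral_finsetSum _ fun t _ => hsqint t, integral_const]
        simp [hsq]
    _ = ellUnitOracle ζ S L w0 w + ((Ntr : ℝ)⁻¹ * traceSpp S + ζ ^ 2 * Tpre / Ntr) := by
        rw [ellUnitOracle_eq, Finset.sum_add_distrib, ← Finset.mul_sum, sum_signedWeights_sq,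
          sum_sq_of_mem_OmegaSet hw]
        simp only [traceSpp, signal, c]
        ring

end

theorem expected_unit_objective_general {Nco Ntr Tpre Tpost : ℕ}
    {Ωt : Type*} [MeasurableSpace Ωt] (μ : Measure Ωt) [IsProbabilityMeasure μ]
    (L τm : Matrix (Fin (Nco + Ntr)) (Fin (Tpre + Tpost)) ℝ)
    (E : Fin (Nco + Ntr) → Fin (Tpre + Tpost) → Ωt → ℝ)
    (S : Matrix (Fin (Tpre + Tpost)) (Fin (Tpre + Tpost)) ℝ) (ζ : ℝ)
    (hrowindep : iIndepFun
      (fun (i : Fin (Nco + Ntr)) (ω : Ωt) => fun t => E i t ω) μ)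
    (hint : ∀ i t, Integrable (E i t) μ)
    (hmean : ∀ i t, ∫ ω, E i t ω ∂μ = 0)
    (hcovint : ∀ i s t, Integrable (fun ω => E i s ω * E i t ω) μ)
    (hcov : ∀ i s t, ∫ ω, E i s ω * E i t ω ∂μ = S s t) :
    (∀ (w0 : ℝ) (w : Fin (Nco + Ntr) → ℝ), w ∈ OmegaSet Nco Ntr →
      ∫ ω, ellUnit ζ (Ymat L τm (fun i t => E i t ω)) w0 w ∂μ
        = ellUnitOracle ζ S L w0 w
          + ((Ntr : ℝ)⁻¹ * traceSpp S + ζ ^ 2 * Tpre / Ntr)) ∧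
    (∀ p : ℝ × (Fin (Nco + Ntr) → ℝ), p.2 ∈ OmegaSet Nco Ntr →
      (IsMinOn (fun q : ℝ × (Fin (Nco + Ntr) → ℝ) =>
          ∫ ω, ellUnit ζ (Ymat L τm (fun i t => E i t ω)) q.1 q.2 ∂μ)
        {q : ℝ × (Fin (Nco + Ntr) → ℝ) | q.2 ∈ OmegaSet Nco Ntr} p
       ↔ IsMinOn (fun q : ℝ × (Fin (Nco + Ntr) → ℝ) => ellUnitOracle ζ S L q.1 q.2)
        {q : ℝ × (Fin (Nco + Ntr) → ℝ) | q.2 ∈ OmegaSet Nco Ntr} p)) := by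
  have hexpected : ∀ (w0 : ℝ) (w : Fin (Nco + Ntr) → ℝ), w ∈ OmegaSet Nco Ntr →
      ∫ ω, ellUnit ζ (Ymat L τm (fun i t => E i t ω)) w0 w ∂μ
        = ellUnitOracle ζ S L w0 w + ((Ntr : ℝ)⁻¹ * traceSpp S + ζ ^ 2 * Tpre / Ntr) :=
    fun w0 _ hw => integral_ellUnit_Ymat L τm S ζ hrowindep hint hmean
      (fun i t => hcovint i t t) (fun i t => hcov i t t) w0 hw
  exact ⟨hexpected, fun p hp =>
    isMinOn_iff_of_eqOn_add_const _ (fun q hq => hexpected q.1 q.2 hq) hp⟩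

/-- if the rows of `E` are independent, mean zero, with common covariance
`Σ`, then for all `ω₀ ∈ ℝ`, `ω ∈ Ω`,
`E ℓ_unit(ω₀,ω) = ‖ω₀·1 + L_{co,pre}'ω_co − L_{tr,pre}'ω_tr‖²
  + (tr Σ_{pre,pre} + ζ²T_pre)·‖ω_co‖² + c`,
with `c = N_tr⁻¹ tr Σ_{pre,pre} + ζ²T_pre/N_tr` independent of `(ω₀, ω_co)`;
consequently the minimizers of `E ℓ_unit` over `ℝ×Ω` coincide with those of the
deterministic surrogate objective. -/
theorem expected_unit_objective {Nco Ntr Tpre Tpost : ℕ}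
    (hNtr : 1 ≤ Ntr) (hTpost : 1 ≤ Tpost)
    {Ωt : Type*} [MeasurableSpace Ωt] (μ : Measure Ωt) [IsProbabilityMeasure μ]
    (L τm : Matrix (Fin (Nco + Ntr)) (Fin (Tpre + Tpost)) ℝ)
    (E : Fin (Nco + Ntr) → Fin (Tpre + Tpost) → Ωt → ℝ)
    (S : Matrix (Fin (Tpre + Tpost)) (Fin (Tpre + Tpost)) ℝ) (ζ : ℝ)
    (hmeas : ∀ i t, Measurable (E i t))
    (hrowindep : iIndepFun
      (fun (i : Fin (Nco + Ntr)) (ω : Ωt) => fun t => E i t ω) μ)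
    (hint : ∀ i t, Integrable (E i t) μ)
    (hmean : ∀ i t, ∫ ω, E i t ω ∂μ = 0)
    (hcovint : ∀ i s t, Integrable (fun ω => E i s ω * E i t ω) μ)
    (hcov : ∀ i s t, ∫ ω, E i s ω * E i t ω ∂μ = S s t) :
    (∀ (w0 : ℝ) (w : Fin (Nco + Ntr) → ℝ), w ∈ OmegaSet Nco Ntr →
      ∫ ω, ellUnit ζ (Ymat L τm (fun i t => E i t ω)) w0 w ∂μ
        = ellUnitOracle ζ S L w0 w
          + ((Ntr : ℝ)⁻¹ * traceSpp S + ζ ^ 2 * Tpre / Ntr)) ∧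
    (∀ p : ℝ × (Fin (Nco + Ntr) → ℝ), p.2 ∈ OmegaSet Nco Ntr →
      (IsMinOn (fun q : ℝ × (Fin (Nco + Ntr) → ℝ) =>
          ∫ ω, ellUnit ζ (Ymat L τm (fun i t => E i t ω)) q.1 q.2 ∂μ)
        {q : ℝ × (Fin (Nco + Ntr) → ℝ) | q.2 ∈ OmegaSet Nco Ntr} p
       ↔ IsMinOn (fun q : ℝ × (Fin (Nco + Ntr) → ℝ) => ellUnitOracle ζ S L q.1 q.2)
        {q : ℝ × (Fin (Nco + Ntr) → ℝ) | q.2 ∈ OmegaSet Nco Ntr} p)) :=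
  expected_unit_objective_general μ L τm E S ζ hrowindep hint hmean hcovint hcov

end SDID
end
end

section
/- In the block panel design, the weighted two-way fixed-effects regression recovers the weighted double-differencing estimator: let ω ∈ Ω and λ ∈ Λ have strictly positive coordinates, and let (τ̂, μ̂, α̂, β̂) be any minimizer of Σ_{i,t} ω_i λ_t (Y_{it} − μ − α_i − β_t − W_{it}τ)² over ℝ × ℝ × ℝ^N × ℝ^T with W_{it} = 1{i > N_co, t > T_pre}. Then the τ-component is unique and equals τ̂ = ω_tr'Y_{tr,post}λ_post − ω_co'Y_{co,post}λ_post − ω_tr'Y_{tr,pre}λ_pre + ω_co'Y_{co,pre}λ_pre. -/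
/-!
At a minimiser `p = (τ, μ, α, β)` the weighted residual `r = Y - μ - α_i - β_t - W_{it} τ` is
orthogonal to every fitted value of the model (the normal equations). The sign pattern `s_i s_t`,
with `s = +1` on treated units and post-treatment periods and `s = -1` elsewhere, is such a fitted
value. Weighting it by `ω_i λ_t` gives a double contrast `a_i b_t` with `∑ a = ∑ b = 0`, because
each block of `ω` and of `λ` sums to one. This contrast annihilates `μ`, `α` and `β`, sends `W` to
`(∑_tr ω)(∑_post λ) = 1` and `Y` to `τ̂(ω, λ)`, so orthogonality reads `τ̂(ω, λ) - τ = 0`.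
-/

open Filter MeasureTheory ProbabilityTheory Matrix Real Asymptotics

noncomputable section

namespace SDID

/-- Weighted two-way fixed effects objective with unit weights `w` and time weights `l`. -/
def wDidObj {Nco Ntr Tpre Tpost : ℕ} (w : Fin (Nco + Ntr) → ℝ) (l : Fin (Tpre + Tpost) → ℝ)
    (Y : Matrix (Fin (Nco + Ntr)) (Fin (Tpre + Tpost)) ℝ)
    (p : ℝ × ℝ × (Fin (Nco + Ntr) → ℝ) × (Fin (Tpre + Tpost) → ℝ)) : ℝ :=
  ∑ i, ∑ t, w i * l t *
    (Y i t - p.2.1 - p.2.2.1 i - p.2.2.2 t - Wind Nco Ntr Tpre Tpost i t * p.1) ^ 2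

section TwoWayFixedEffects

variable {ι κ : Type*}

/-- `μ + α_i + β_t + W_{it} τ` at `p = (τ, μ, α, β)`. -/
def twoWayFit (W : Matrix ι κ ℝ) : (ℝ × ℝ × (ι → ℝ) × (κ → ℝ)) →ₗ[ℝ] Matrix ι κ ℝ where
  toFun p := Matrix.of fun i t => p.2.1 + p.2.2.1 i + p.2.2.2 t + W i t * p.1
  map_add' p q := by
    ext i t
    simp only [Matrix.of_apply, Matrix.add_apply, Prod.fst_add, Prod.snd_add, Pi.add_apply]
    ring
  map_smul' a p := by
    ext i t
    simp only [Matrix.of_apply, Matrix.smul_apply, Prod.smul_fst, Prod.smul_snd, Pi.smul_apply,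
      smul_eq_mul, RingHom.id_apply]
    ring

@[simp]
theorem twoWayFit_apply (W : Matrix ι κ ℝ) (p : ℝ × ℝ × (ι → ℝ) × (κ → ℝ)) (i : ι) (t : κ) :
    twoWayFit W p i t = p.2.1 + p.2.2.1 i + p.2.2.2 t + W i t * p.1 := rfl

variable [Fintype ι] [Fintype κ]

theorem sum_sum_mul_mul_sub_eq_zero_of_isMinOn {E : Type*} [AddCommGroup E] [Module ℝ E]
    (c Y : Matrix ι κ ℝ) (A : E →ₗ[ℝ] Matrix ι κ ℝ) {p : E}
    (hmin : IsMinOn (fun q => ∑ i, ∑ t, c i t * (Y i t - A q i t) ^ 2) Set.univ p) (d : E) :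
    ∑ i, ∑ t, c i t * A d i t * (Y i t - A p i t) = 0 := by
  set L := ∑ i, ∑ t, c i t * A d i t * (Y i t - A p i t)
  -- along `p + ε • d` the objective is `f p + Q ε² - 2 L ε`, minimal at `ε = 0`,
  -- so the discriminant `4 L²` is nonpositive
  have hline : ∀ ε : ℝ, 0 ≤ (∑ i, ∑ t, c i t * A d i t ^ 2) * (ε * ε) + (-2 * L) * ε + 0 := by
    intro ε
    have hε := isMinOn_iff.mp hmin (p + ε • d) (Set.mem_univ _)
    have hexp : ∀ i t, c i t * (Y i t - A (p + ε • d) i t) ^ 2 = c i t * (Y i t - A p i t) ^ 2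
        + (c i t * A d i t ^ 2 * (ε * ε) - 2 * (c i t * A d i t * (Y i t - A p i t)) * ε) := by
      intro i t
      simp only [map_add, map_smul, Matrix.add_apply, Matrix.smul_apply, smul_eq_mul]
      ring
    simp only [hexp, Finset.sum_add_distrib, Finset.sum_sub_distrib, ← Finset.sum_mul,
      ← Finset.mul_sum] at hε
    linarith
  have hL := discrim_le_zero hline
  rw [discrim] at hL
  nlinarith [sq_nonneg L]

theorem sum_sum_mul_mul_twoWayFit {a : ι → ℝ} {b : κ → ℝ} (ha : ∑ i, a i = 0)
    (hb : ∑ t, b t = 0) (W : Matrix ι κ ℝ) (p : ℝ × ℝ × (ι → ℝ) × (κ → ℝ)) :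
    ∑ i, ∑ t, a i * b t * twoWayFit W p i t = p.1 * ∑ i, ∑ t, a i * b t * W i t := by
  have hcell : ∀ i t, a i * b t * twoWayFit W p i t = p.2.1 * (a i * b t)
      + a i * p.2.2.1 i * b t + a i * (b t * p.2.2.2 t) + p.1 * (a i * b t * W i t) := by
    intro i t
    rw [twoWayFit_apply]
    ring
  simp only [hcell, Finset.sum_add_distrib, ← Finset.mul_sum, ← Finset.sum_mul, ha, hb,
    mul_zero, zero_mul, zero_add]

end TwoWayFixedEffects

section BlockSign

variable {m n : ℕ}

def blockSign (m n : ℕ) (i : Fin (m + n)) : ℝ := if m ≤ (i : ℕ) then 1 else -1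

@[simp]
theorem blockSign_castAdd (i : Fin m) : blockSign m n (Fin.castAdd n i) = -1 :=
  if_neg (by simp)

@[simp]
theorem blockSign_natAdd (i : Fin n) : blockSign m n (Fin.natAdd m i) = 1 :=
  if_pos (by simp)

theorem sum_blockSign_mul (f : Fin (m + n) → ℝ) :
    ∑ i, blockSign m n i * f i
      = ∑ i : Fin n, f (Fin.natAdd m i) - ∑ i : Fin m, f (Fin.castAdd n i) := by
  simp [Fin.sum_univ_add]
  ring

theorem sum_natAdd_eq_one {v : Fin (m + n) → ℝ} (hn : n ≠ 0)
    (hv : ∀ i : Fin n, v (Fin.natAdd m i) = (n : ℝ)⁻¹) :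
    ∑ i : Fin n, v (Fin.natAdd m i) = 1 := by
  simp [hv, hn]

theorem sum_blockSign_mul_eq_zero {v : Fin (m + n) → ℝ} (hn : n ≠ 0)
    (hv₀ : ∑ i : Fin m, v (Fin.castAdd n i) = 1)
    (hv₁ : ∀ i : Fin n, v (Fin.natAdd m i) = (n : ℝ)⁻¹) :
    ∑ i, blockSign m n i * v i = 0 := by
  rw [sum_blockSign_mul, sum_natAdd_eq_one hn hv₁, hv₀, sub_self]

end BlockSign

section BlockDesign

variable {Nco Ntr Tpre Tpost : ℕ}

@[simp]
theorem Wind_castAdd_left (i : Fin Nco) (t : Fin (Tpre + Tpost)) :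
    Wind Nco Ntr Tpre Tpost (Fin.castAdd Ntr i) t = 0 :=
  if_neg (by simp)

@[simp]
theorem Wind_castAdd_right (i : Fin (Nco + Ntr)) (t : Fin Tpre) :
    Wind Nco Ntr Tpre Tpost i (Fin.castAdd Tpost t) = 0 :=
  if_neg (by simp)

@[simp]
theorem Wind_natAdd_natAdd (i : Fin Ntr) (t : Fin Tpost) :
    Wind Nco Ntr Tpre Tpost (Fin.natAdd Nco i) (Fin.natAdd Tpre t) = 1 :=
  if_pos (by simp)

-- `4 W_{it} = (1 + s_i) (1 + s_t)`, so `s_i s_t = -1 - s_i - s_t + 4 W_{it}`.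
theorem twoWayFit_Wind_blockSign (i : Fin (Nco + Ntr)) (t : Fin (Tpre + Tpost)) :
    twoWayFit (Wind Nco Ntr Tpre Tpost)
        (4, -1, -blockSign Nco Ntr, -blockSign Tpre Tpost) i t
      = blockSign Nco Ntr i * blockSign Tpre Tpost t := by
  simp only [twoWayFit_apply, Pi.neg_apply, Wind, blockSign]
  split_ifs <;> grind

theorem wDidObj_eq (w : Fin (Nco + Ntr) → ℝ) (l : Fin (Tpre + Tpost) → ℝ)
    (Y : Matrix (Fin (Nco + Ntr)) (Fin (Tpre + Tpost)) ℝ) :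
    wDidObj w l Y = fun q =>
      ∑ i, ∑ t, w i * l t * (Y i t - twoWayFit (Wind Nco Ntr Tpre Tpost) q i t) ^ 2 := by
  funext q
  simp only [wDidObj, twoWayFit_apply, sub_add_eq_sub_sub]

theorem tauWDD_eq_sum_sum_blockSign (w : Fin (Nco + Ntr) → ℝ) (l : Fin (Tpre + Tpost) → ℝ)
    (Y : Matrix (Fin (Nco + Ntr)) (Fin (Tpre + Tpost)) ℝ) :
    tauWDD w l Y
      = ∑ i, ∑ t, blockSign Nco Ntr i * w i * (blockSign Tpre Tpost t * l t) * Y i t := by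
  have hcell : ∀ i t, blockSign Nco Ntr i * w i * (blockSign Tpre Tpost t * l t) * Y i t
      = blockSign Nco Ntr i * (blockSign Tpre Tpost t * (w i * Y i t * l t)) := by
    intro i t
    ring
  simp only [hcell, ← Finset.mul_sum, sum_blockSign_mul, Finset.sum_sub_distrib, tauWDD]
  ring

theorem sum_sum_blockSign_mul_Wind (w : Fin (Nco + Ntr) → ℝ) (l : Fin (Tpre + Tpost) → ℝ) :
    ∑ i, ∑ t, blockSign Nco Ntr i * w i * (blockSign Tpre Tpost t * l t)
        * Wind Nco Ntr Tpre Tpost i t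
      = (∑ i : Fin Ntr, w (Fin.natAdd Nco i)) * ∑ t : Fin Tpost, l (Fin.natAdd Tpre t) := by
  have hcell : ∀ i t, blockSign Nco Ntr i * w i * (blockSign Tpre Tpost t * l t)
      * Wind Nco Ntr Tpre Tpost i t = blockSign Nco Ntr i
        * (blockSign Tpre Tpost t * (w i * l t * Wind Nco Ntr Tpre Tpost i t)) := by
    intro i t
    ring
  simp only [hcell, ← Finset.mul_sum, sum_blockSign_mul]
  simp [Finset.sum_mul_sum]

end BlockDesign

theorem weighted_regression_equals_tauWDD_general {Nco Ntr Tpre Tpost : ℕ}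
    (hNtr : 1 ≤ Ntr) (hTpost : 1 ≤ Tpost)
    (w : Fin (Nco + Ntr) → ℝ) (l : Fin (Tpre + Tpost) → ℝ)
    (hw : w ∈ OmegaSet Nco Ntr) (hl : l ∈ LambdaSet Tpre Tpost)
    (Y : Matrix (Fin (Nco + Ntr)) (Fin (Tpre + Tpost)) ℝ)
    (p : ℝ × ℝ × (Fin (Nco + Ntr) → ℝ) × (Fin (Tpre + Tpost) → ℝ))
    (hmin : IsMinOn (wDidObj w l Y) Set.univ p) :
    p.1 = tauWDD w l Y := by
  obtain ⟨-, hwco, hwtr⟩ := hw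
  obtain ⟨-, hlpre, hlpost⟩ := hl
  set W := Wind Nco Ntr Tpre Tpost
  set a := fun i => blockSign Nco Ntr i * w i
  set b := fun t => blockSign Tpre Tpost t * l t
  have hnormal : ∑ i, ∑ t, a i * b t * (Y i t - twoWayFit W p i t) = 0 := by
    rw [← sum_sum_mul_mul_sub_eq_zero_of_isMinOn (fun i t => w i * l t) Y (twoWayFit W)
      (wDidObj_eq w l Y ▸ hmin) (4, -1, -blockSign Nco Ntr, -blockSign Tpre Tpost)]
    refine Finset.sum_congr rfl fun i _ => Finset.sum_congr rfl fun t _ => ?_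
    rw [twoWayFit_Wind_blockSign]
    ring
  calc p.1 = p.1 * ∑ i, ∑ t, a i * b t * W i t := by
        rw [sum_sum_blockSign_mul_Wind, sum_natAdd_eq_one (by omega) hwtr,
          sum_natAdd_eq_one (by omega) hlpost, mul_one, mul_one]
    _ = ∑ i, ∑ t, a i * b t * twoWayFit W p i t :=
        (sum_sum_mul_mul_twoWayFit (sum_blockSign_mul_eq_zero (by omega) hwco hwtr)
          (sum_blockSign_mul_eq_zero (by omega) hlpre hlpost) W p).symm
    _ = ∑ i, ∑ t, a i * b t * Y i t := by
        simp only [mul_sub, Finset.sum_sub_distrib] at hnormal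
        linarith
    _ = tauWDD w l Y := (tauWDD_eq_sum_sum_blockSign w l Y).symm

/-- for unit weights `ω ∈ Ω` and time weights `λ ∈ Λ` with strictly
positive coordinates, the `τ`-component of any minimizer of the weighted two-way
fixed-effects objective equals the weighted double-differencing estimator
`ω_tr'Y_{tr,post}λ_post − ω_co'Y_{co,post}λ_post − ω_tr'Y_{tr,pre}λ_pre + ω_co'Y_{co,pre}λ_pre`. -/
theorem weighted_regression_equals_tauWDD {Nco Ntr Tpre Tpost : ℕ}
    (hNtr : 1 ≤ Ntr) (hTpost : 1 ≤ Tpost)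
    (w : Fin (Nco + Ntr) → ℝ) (l : Fin (Tpre + Tpost) → ℝ)
    (hw : w ∈ OmegaSet Nco Ntr) (hl : l ∈ LambdaSet Tpre Tpost)
    (hwpos : ∀ i, 0 < w i) (hlpos : ∀ t, 0 < l t)
    (Y : Matrix (Fin (Nco + Ntr)) (Fin (Tpre + Tpost)) ℝ)
    (p : ℝ × ℝ × (Fin (Nco + Ntr) → ℝ) × (Fin (Tpre + Tpost) → ℝ))
    (hmin : IsMinOn (wDidObj w l Y) Set.univ p) :
    p.1 = tauWDD w l Y :=
  weighted_regression_equals_tauWDD_general hNtr hTpost w l hw hl Y p hmin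

end SDID
end
end
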